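/- arXiv:2102.01179 — 14 statements merged into one kernel-verified Lean document; each statement's English description precedes it below -/
import Mathlib

section
/- Let R be a ring, M a right R-module, L₁ and L₂ lattices, and φ an order (lattice) isomorphism from the lattice of submodules of M onto the product lattice L₁ × L₂. Define M₁ := φ⁻¹((φ ⊤).1, (φ ⊥).2) and M₂ := φ⁻¹((φ ⊥).1, (φ ⊤).2). Then M₁ ⊓ M₂ = ⊥ and M₁ ⊔ M₂ = ⊤ (so M is the internal direct sum of M₁ and M₂), both M₁ and M₂ are distributive submodules of M, and the map X ↦ (X ⊓ M₁, X ⊓ M₂) is an order isomorphism from the lattice of submodules of M onto the product of the lattices of submodules of M₁ and of M₂. -/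
/-!
Under `φ`, `M₁` corresponds to `(⊤, ⊥)` and `M₂` to `(⊥, ⊤)`; computing coordinatewise in
`L₁ × L₂` gives `M₁ ⊓ M₂ = ⊥` and `X = (X ⊓ M₁) ⊔ (X ⊓ M₂)` for every `X`. In a modular lattice
these two facts alone make `X ↦ (X ⊓ M₁, X ⊓ M₂)` an isomorphism onto `Iic M₁ × Iic M₂` with
inverse `(Y, Z) ↦ Y ⊔ Z`. It sends `M₁` to `(⊤, ⊥)`, which is a distributive element of any product
of bounded lattices, and `Iic N` is the lattice of submodules of `N`.
-/

/-- A submodule `N ⊆ M` is distributive if the sublattice of `𝓛(M)` generated by `N` and any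
two submodules is distributive. -/
def IsDistribSubmodule {R M : Type*} [Ring R] [AddCommGroup M] [Module R M]
    (N : Submodule R M) : Prop :=
  ∀ Y₁ Y₂ : Submodule R M, N ⊔ (Y₁ ⊓ Y₂) = (N ⊔ Y₁) ⊓ (N ⊔ Y₂)

open Set

def OrderIso.prodCongr {α₁ α₂ β₁ β₂ : Type*} [LE α₁] [LE α₂] [LE β₁] [LE β₂]
    (e₁ : α₁ ≃o β₁) (e₂ : α₂ ≃o β₂) : α₁ × α₂ ≃o β₁ × β₂ where
  toEquiv := e₁.toEquiv.prodCongr e₂.toEquiv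
  map_rel_iff' := by simp [Prod.le_def]

section Modular

variable {α : Type*} [Lattice α] [OrderBot α] [IsModularLattice α] {a b : α}

theorem Disjoint.sup_inf_eq_of_le (h : Disjoint a b) {y z : α} (hy : y ≤ a) (hz : z ≤ b) :
    (y ⊔ z) ⊓ a = y := by
  rw [sup_inf_assoc_of_le z hy, disjoint_iff.1 (h.symm.mono_left hz), sup_bot_eq]

def Disjoint.orderIsoIicProdIic (h : Disjoint a b) (hsplit : ∀ x, x ⊓ a ⊔ x ⊓ b = x) :
    α ≃o Iic a × Iic b where
  toFun x := (⟨x ⊓ a, inf_le_right⟩, ⟨x ⊓ b, inf_le_right⟩)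
  invFun p := p.1 ⊔ p.2
  left_inv := hsplit
  right_inv := fun ⟨⟨y, hy⟩, ⟨z, hz⟩⟩ => by
    ext
    · exact h.sup_inf_eq_of_le hy hz
    · show (y ⊔ z) ⊓ b = z
      rw [sup_comm]
      exact h.symm.sup_inf_eq_of_le hz hy
  map_rel_iff' {x y} := by
    refine ⟨fun hxy => ?_, fun hxy => ⟨inf_le_inf_right a hxy, inf_le_inf_right b hxy⟩⟩
    rw [← hsplit x, ← hsplit y]
    exact sup_le_sup hxy.1 hxy.2

theorem Disjoint.sup_inf_eq_sup_inf_sup (h : Disjoint a b) (hsplit : ∀ x, x ⊓ a ⊔ x ⊓ b = x)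
    (y z : α) : a ⊔ y ⊓ z = (a ⊔ y) ⊓ (a ⊔ z) := by
  let ψ := h.orderIsoIicProdIic hsplit
  have hψa : ψ a = (⊤, ⊥) := by
    ext
    · exact inf_idem a
    · exact disjoint_iff.1 h
  apply ψ.injective
  simp only [ψ.map_sup, ψ.map_inf, hψa]
  ext <;> simp

end Modular

namespace OrderIso

variable {α L₁ L₂ : Type*} [Lattice α] [BoundedOrder α] [Lattice L₁] [Lattice L₂]
  (φ : α ≃o L₁ × L₂)

def fstSummand : α := φ.symm ((φ ⊤).1, (φ ⊥).2)

def sndSummand : α := φ.symm ((φ ⊥).1, (φ ⊤).2)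

theorem apply_inf_fstSummand (x : α) : φ (x ⊓ φ.fstSummand) = ((φ x).1, (φ ⊥).2) := by
  rw [fstSummand, φ.map_inf, φ.apply_symm_apply]
  ext
  · exact inf_eq_left.2 (φ.symm_apply_le.1 le_top).1
  · exact inf_eq_right.2 (φ.le_symm_apply.1 bot_le).2

theorem apply_inf_sndSummand (x : α) : φ (x ⊓ φ.sndSummand) = ((φ ⊥).1, (φ x).2) := by
  simpa [fstSummand, sndSummand, Prod.ext_iff, and_comm] using
    (φ.trans prodComm).apply_inf_fstSummand x

theorem disjoint_fstSummand_sndSummand : Disjoint φ.fstSummand φ.sndSummand := by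
  rw [disjoint_iff]
  apply φ.injective
  rw [φ.apply_inf_sndSummand, fstSummand, φ.apply_symm_apply]

theorem inf_fstSummand_sup_inf_sndSummand (x : α) :
    x ⊓ φ.fstSummand ⊔ x ⊓ φ.sndSummand = x := by
  apply φ.injective
  rw [φ.map_sup, φ.apply_inf_fstSummand, φ.apply_inf_sndSummand]
  ext
  · exact sup_eq_left.2 (φ.le_symm_apply.1 bot_le).1
  · exact sup_eq_right.2 (φ.le_symm_apply.1 bot_le).2

end OrderIso

/-- If the lattice of submodules of a right `R`-module `M` is a product of two lattices
`L₁ × L₂`, then `M = M₁ ⊕ M₂` where `M₁, M₂` are the distributive submodules corresponding to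
`((φ ⊤).1, (φ ⊥).2)` and `((φ ⊥).1, (φ ⊤).2)`, and
`𝓛(M) ≅ 𝓛(M₁) × 𝓛(M₂)` via `X ↦ (X ⊓ M₁, X ⊓ M₂)`. -/
theorem lattice_decomposition_of_prod {R M : Type*} [Ring R] [AddCommGroup M]
    [Module Rᵐᵒᵖ M] {L₁ L₂ : Type*} [Lattice L₁] [Lattice L₂]
    (φ : Submodule Rᵐᵒᵖ M ≃o L₁ × L₂)
    (M₁ : Submodule Rᵐᵒᵖ M) (hM₁ : M₁ = φ.symm ((φ ⊤).1, (φ ⊥).2))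
    (M₂ : Submodule Rᵐᵒᵖ M) (hM₂ : M₂ = φ.symm ((φ ⊥).1, (φ ⊤).2)) :
    M₁ ⊓ M₂ = ⊥ ∧ M₁ ⊔ M₂ = ⊤ ∧
    IsDistribSubmodule M₁ ∧ IsDistribSubmodule M₂ ∧
    ∃ ψ : Submodule Rᵐᵒᵖ M ≃o Submodule Rᵐᵒᵖ M₁ × Submodule Rᵐᵒᵖ M₂,
      ∀ X : Submodule Rᵐᵒᵖ M,
        ψ X = (Submodule.comap M₁.subtype (X ⊓ M₁), Submodule.comap M₂.subtype (X ⊓ M₂)) := by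
  have hdisj : Disjoint M₁ M₂ := hM₁ ▸ hM₂ ▸ φ.disjoint_fstSummand_sndSummand
  have hsplit : ∀ X, X ⊓ M₁ ⊔ X ⊓ M₂ = X := hM₁ ▸ hM₂ ▸ φ.inf_fstSummand_sup_inf_sndSummand
  have hsplit' : ∀ X, X ⊓ M₂ ⊔ X ⊓ M₁ = X := fun X => (sup_comm _ _).trans (hsplit X)
  refine ⟨disjoint_iff.1 hdisj, by simpa using hsplit ⊤, hdisj.sup_inf_eq_sup_inf_sup hsplit,
    hdisj.symm.sup_inf_eq_sup_inf_sup hsplit', ?_⟩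
  exact ⟨(hdisj.orderIsoIicProdIic hsplit).trans (M₁.mapIic.symm.prodCongr M₂.mapIic.symm),
    fun X => rfl⟩
end

section
/- Let R be a ring, M a right R-module, and N a submodule of M. Then N is a distributive submodule of M if and only if for every m ∈ M and every n ∈ N there exist a, b ∈ R with a + b = 1 such that m·a ∈ N and n·b lies in the cyclic submodule m·R generated by m (i.e., (N : m) + (mR : n) = R). -/
namespace IsDistribSubmodule

variable {S M : Type*} [Ring S] [AddCommGroup M] [Module S M] {N : Submodule S M}

theorem of_inf_sup_le (h : ∀ Y₁ Y₂ : Submodule S M, (N ⊔ Y₁) ⊓ (N ⊔ Y₂) ≤ N ⊔ (Y₁ ⊓ Y₂)) :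
    IsDistribSubmodule N :=
  fun Y₁ Y₂ ↦ le_antisymm sup_inf_le (h Y₁ Y₂)

theorem exists_add_eq_one (hN : IsDistribSubmodule N) (m : M) {n : M} (hn : n ∈ N) :
    ∃ a b : S, a + b = 1 ∧ a • m ∈ N ∧ b • n ∈ S ∙ m := by
  have hmem : m + n ∈ N ⊔ ((S ∙ m) ⊓ (S ∙ (m + n))) := by
    rw [hN]
    exact ⟨add_comm n m ▸ Submodule.add_mem_sup hn (Submodule.mem_span_singleton_self m),
      Submodule.mem_sup_right (Submodule.mem_span_singleton_self _)⟩
  obtain ⟨ν, hν, z, ⟨hzm, hzmn⟩, hsum⟩ := Submodule.mem_sup.mp hmem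
  obtain ⟨d, rfl⟩ := Submodule.mem_span_singleton.mp hzm
  obtain ⟨c, hc⟩ := Submodule.mem_span_singleton.mp hzmn
  refine ⟨1 - c, c, sub_add_cancel 1 c, ?_, ?_⟩
  · have hm : (1 - c) • m = ν - (1 - c) • n := by
      rw [eq_sub_of_add_eq hsum, ← hc, sub_smul, sub_smul, one_smul, one_smul, smul_add]
      abel
    rw [hm]
    exact sub_mem hν (N.smul_mem _ hn)
  · have hcn : c • n = d • m - c • m := by
      rw [← hc, smul_add]
      abel
    rw [hcn]
    exact sub_mem (Submodule.smul_mem _ d (Submodule.mem_span_singleton_self m))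
      (Submodule.smul_mem _ c (Submodule.mem_span_singleton_self m))

theorem of_exists_add_eq_one
    (h : ∀ m : M, ∀ n ∈ N, ∃ a b : S, a + b = 1 ∧ a • m ∈ N ∧ b • n ∈ S ∙ m) :
    IsDistribSubmodule N := by
  refine of_inf_sup_le fun Y₁ Y₂ x ⟨hx₁, hx₂⟩ ↦ ?_
  obtain ⟨n₁, hn₁, y₁, hy₁, rfl⟩ := Submodule.mem_sup.mp hx₁
  obtain ⟨n₂, hn₂, y₂, hy₂, hx⟩ := Submodule.mem_sup.mp hx₂
  have hn : n₂ - n₁ ∈ N := sub_mem hn₂ hn₁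
  have hy : y₁ = (n₂ - n₁) + y₂ := by
    rw [sub_add_eq_add_sub, hx, add_sub_cancel_left]
  obtain ⟨a, b, hab, ha, hb⟩ := h y₁ (n₂ - n₁) hn
  have hbn : b • (n₂ - n₁) ∈ Y₁ := Submodule.span_singleton_le_iff_mem _ _ |>.mpr hy₁ hb
  have hby₂ : b • y₂ ∈ Y₁ ⊓ Y₂ := by
    refine ⟨?_, Y₂.smul_mem b hy₂⟩
    rw [show b • y₂ = b • y₁ - b • (n₂ - n₁) by rw [hy, smul_add, add_sub_cancel_left]]
    exact sub_mem (Y₁.smul_mem b hy₁) hbn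
  have hdecomp : y₁ = a • y₁ + b • (n₂ - n₁) + b • y₂ := by
    rw [add_assoc, ← smul_add, ← hy, ← add_smul, hab, one_smul]
  have hsplit : n₁ + y₁ = (n₁ + a • y₁ + b • (n₂ - n₁)) + b • y₂ :=
    calc n₁ + y₁ = n₁ + (a • y₁ + b • (n₂ - n₁) + b • y₂) := congrArg (n₁ + ·) hdecomp
      _ = _ := by abel
  rw [hsplit]
  exact Submodule.add_mem_sup (add_mem (add_mem hn₁ ha) (N.smul_mem b hn)) hby₂

end IsDistribSubmodule

theorem isDistribSubmodule_iff_exists_add_eq_one {S M : Type*} [Ring S] [AddCommGroup M]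
    [Module S M] (N : Submodule S M) :
    IsDistribSubmodule N ↔ ∀ m : M, ∀ n ∈ N, ∃ a b : S, a + b = 1 ∧ a • m ∈ N ∧ b • n ∈ S ∙ m :=
  ⟨fun hN m _ hn ↦ hN.exists_add_eq_one m hn, IsDistribSubmodule.of_exists_add_eq_one⟩

/-- `N ⊆ M` is distributive iff `(N : m) + (mR : n) = R` for all `m ∈ M`, `n ∈ N`. -/
theorem isDistribSubmodule_iff_colon {R M : Type*} [Ring R] [AddCommGroup M]
    [Module Rᵐᵒᵖ M] (N : Submodule Rᵐᵒᵖ M) :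
    IsDistribSubmodule N ↔
      ∀ m : M, ∀ n ∈ N, ∃ a b : R, a + b = 1 ∧
        (MulOpposite.op a) • m ∈ N ∧
        (MulOpposite.op b) • n ∈ Submodule.span Rᵐᵒᵖ ({m} : Set M) := by
  rw [isDistribSubmodule_iff_exists_add_eq_one]
  refine forall₃_congr fun m n _ ↦ ?_
  simp only [MulOpposite.op_surjective.exists, ← MulOpposite.op_add, ← MulOpposite.op_one,
    MulOpposite.op_inj]
end

section
/- Let R be a ring such that any two simple right R-modules are isomorphic (for instance, a local ring), let M be a right R-module, and let N be a proper submodule of M (N ≠ M). Then the following are equivalent: (a) N is a distributive submodule of M; (b) N ≤ m·R for every m ∈ M \ N, where m·R is the cyclic submodule generated by m; (c) N is comparable with every submodule of M, i.e., for every submodule H of M either H ≤ N or N ≤ H. -/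
/-!
Comparability with every submodule gives distributivity by the modular law, and `N ≤ mR` for all
`m ∉ N` is just comparability tested on cyclic submodules. For the converse, suppose `N` is
distributive, `m ∉ N` and `n ∈ N \ mR`. For `x ∈ N`, `m` lies in `(N + mR) ∩ (N + (m + x)R)`,
hence in `N + (mR ∩ (m + x)R)`, which yields `γ` with `mγ ∈ N` and `x(1 - γ) ∈ mR`. Taking
`x = nρ`: for every `ρ` there is `γ ∈ B := {r | mr ∈ N}` with `ρ(1 - γ) ∈ A := {r | nr ∈ mR}`,
and `A`, `B` are proper right ideals. Enlarge them to maximal right ideals `𝔪 ⊇ A`, `𝔫 ⊇ B`; an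
isomorphism `R/𝔪 ≅ R/𝔫` sends some `ρ + 𝔪` to `1 + 𝔫`, so the annihilator of `ρ + 𝔪` is `𝔫`.
Then `1 - γ ∈ 𝔫` and `γ ∈ 𝔫`, which is absurd.
-/

universe u v

theorem sup_inf_eq_sup_inf_sup_of_forall_le_or_le {L : Type*} [Lattice L] [IsModularLattice L]
    {a : L} (ha : ∀ b, b ≤ a ∨ a ≤ b) (b c : L) : a ⊔ b ⊓ c = (a ⊔ b) ⊓ (a ⊔ c) := by
  rcases ha b with hb | hb
  · rw [sup_eq_left.2 hb, sup_eq_left.2 (inf_le_left.trans hb), inf_eq_left.2 le_sup_left]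
  · rw [sup_eq_right.2 hb, inf_comm b, ← sup_inf_assoc_of_le c hb, inf_comm]

theorem isDistribSubmodule_of_forall_le_or_le {R M : Type*} [Ring R] [AddCommGroup M]
    [Module R M] {N : Submodule R M} (hN : ∀ H : Submodule R M, H ≤ N ∨ N ≤ H) :
    IsDistribSubmodule N :=
  sup_inf_eq_sup_inf_sup_of_forall_le_or_le hN

theorem Submodule.forall_notMem_le_span_singleton_iff {R M : Type*} [Semiring R]
    [AddCommMonoid M] [Module R M] {N : Submodule R M} :
    (∀ m, m ∉ N → N ≤ span R {m}) ↔ ∀ H : Submodule R M, H ≤ N ∨ N ≤ H := by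
  refine ⟨fun h H => or_iff_not_imp_left.2 fun hH => ?_, fun h m hm => ?_⟩
  · obtain ⟨x, hxH, hxN⟩ := SetLike.not_le_iff_exists.1 hH
    exact (h x hxN).trans ((span_singleton_le_iff_mem _ _).2 hxH)
  · exact (h (span R {m})).resolve_left fun hle => hm (hle (mem_span_singleton_self m))

theorem exists_mul_mem_iff_of_linearEquiv_quotient {S : Type*} [Ring S] {I J : Ideal S}
    (e : (S ⧸ I) ≃ₗ[S] (S ⧸ J)) : ∃ ρ : S, ∀ s, s * ρ ∈ I ↔ s ∈ J := by
  obtain ⟨ρ, hρ⟩ := Submodule.Quotient.mk_surjective I (e.symm (Submodule.Quotient.mk 1))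
  refine ⟨ρ, fun s => ?_⟩
  have hs : e (s • Submodule.Quotient.mk ρ) = s • Submodule.Quotient.mk 1 := by
    rw [map_smul, hρ, e.apply_symm_apply]
  rw [← smul_eq_mul, ← Submodule.Quotient.mk_eq_zero, Submodule.Quotient.mk_smul,
    ← e.map_eq_zero_iff, hs, ← Submodule.Quotient.mk_smul, Submodule.Quotient.mk_eq_zero,
    smul_eq_mul, mul_one]

theorem Ideal.exists_forall_one_sub_mul_notMem {S : Type*} [Ring S]
    (hiso : ∀ 𝔪 𝔫 : Ideal S, 𝔪.IsMaximal → 𝔫.IsMaximal → Nonempty ((S ⧸ 𝔪) ≃ₗ[S] (S ⧸ 𝔫)))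
    {A B : Ideal S} (hA : A ≠ ⊤) (hB : B ≠ ⊤) : ∃ ρ : S, ∀ γ ∈ B, (1 - γ) * ρ ∉ A := by
  obtain ⟨𝔪, h𝔪, hA𝔪⟩ := exists_le_maximal A hA
  obtain ⟨𝔫, h𝔫, hB𝔫⟩ := exists_le_maximal B hB
  obtain ⟨e⟩ := hiso 𝔪 𝔫 h𝔪 h𝔫
  obtain ⟨ρ, hρ⟩ := exists_mul_mem_iff_of_linearEquiv_quotient e
  refine ⟨ρ, fun γ hγ hA => h𝔫.ne_top ((eq_top_iff_one _).2 ?_)⟩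
  simpa using 𝔫.add_mem ((hρ _).1 (hA𝔪 hA)) (hB𝔫 hγ)

section

variable {S M : Type*} [Ring S] [AddCommGroup M] [Module S M] {N : Submodule S M}

theorem IsDistribSubmodule.exists_smul_mem_and_sub_smul_mem_span (h : IsDistribSubmodule N)
    (m : M) {x : M} (hx : x ∈ N) : ∃ γ : S, γ • m ∈ N ∧ x - γ • x ∈ Submodule.span S {m} := by
  have hm : m ∈ N ⊔ (Submodule.span S {m} ⊓ Submodule.span S {m + x}) := by
    rw [h]
    refine ⟨Submodule.mem_sup_right (Submodule.mem_span_singleton_self m), ?_⟩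
    simpa using Submodule.add_mem_sup (N.neg_mem hx) (Submodule.mem_span_singleton_self (m + x))
  obtain ⟨n, hn, c, ⟨hcm, hcmx⟩, hnc⟩ := Submodule.mem_sup.1 hm
  obtain ⟨β, rfl⟩ := Submodule.mem_span_singleton.1 hcmx
  refine ⟨1 - β, ?_, ?_⟩
  · rw [show (1 - β) • m = n + β • x by
      rw [sub_smul, one_smul]; nth_rw 1 [← hnc]; rw [smul_add]; abel]
    exact N.add_mem hn (N.smul_mem β hx)
  · rw [show x - (1 - β) • x = β • (m + x) - β • m by rw [sub_smul, one_smul, smul_add]; abel]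
    exact Submodule.sub_mem _ hcm (Submodule.smul_mem _ β (Submodule.mem_span_singleton_self m))

theorem IsDistribSubmodule.le_span_singleton
    (hiso : ∀ 𝔪 𝔫 : Ideal S, 𝔪.IsMaximal → 𝔫.IsMaximal → Nonempty ((S ⧸ 𝔪) ≃ₗ[S] (S ⧸ 𝔫)))
    (h : IsDistribSubmodule N) {m : M} (hm : m ∉ N) : N ≤ Submodule.span S {m} := by
  intro n hn
  by_contra hnm
  have hA : (Submodule.span S {m}).colon {n} ≠ ⊤ := by
    rwa [Ne, Ideal.eq_top_iff_one, Submodule.mem_colon_singleton, one_smul]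
  have hB : N.colon {m} ≠ ⊤ := by
    rwa [Ne, Ideal.eq_top_iff_one, Submodule.mem_colon_singleton, one_smul]
  obtain ⟨ρ, hρ⟩ := Ideal.exists_forall_one_sub_mul_notMem hiso hA hB
  obtain ⟨γ, hγm, hγ⟩ := h.exists_smul_mem_and_sub_smul_mem_span m (N.smul_mem ρ hn)
  refine hρ γ (Submodule.mem_colon_singleton.2 hγm) (Submodule.mem_colon_singleton.2 ?_)
  rwa [mul_smul, sub_smul, one_smul]

end

theorem isDistribSubmodule_iff_of_unique_simple_general {R : Type u} [Ring R] {M : Type v}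
    [AddCommGroup M] [Module Rᵐᵒᵖ M]
    (hsimple : ∀ (S S' : Type u) [AddCommGroup S] [Module Rᵐᵒᵖ S]
      [AddCommGroup S'] [Module Rᵐᵒᵖ S'], IsSimpleModule Rᵐᵒᵖ S → IsSimpleModule Rᵐᵒᵖ S' →
      Nonempty (S ≃ₗ[Rᵐᵒᵖ] S'))
    (N : Submodule Rᵐᵒᵖ M) :
    (IsDistribSubmodule N ↔
        ∀ m : M, m ∉ N → N ≤ Submodule.span Rᵐᵒᵖ ({m} : Set M)) ∧
    ((∀ m : M, m ∉ N → N ≤ Submodule.span Rᵐᵒᵖ ({m} : Set M)) ↔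
        ∀ H : Submodule Rᵐᵒᵖ M, H ≤ N ∨ N ≤ H) := by
  have hiso (𝔪 𝔫 : Ideal Rᵐᵒᵖ) (h𝔪 : 𝔪.IsMaximal) (h𝔫 : 𝔫.IsMaximal) :
      Nonempty ((Rᵐᵒᵖ ⧸ 𝔪) ≃ₗ[Rᵐᵒᵖ] (Rᵐᵒᵖ ⧸ 𝔫)) :=
    hsimple _ _ (isSimpleModule_iff_isCoatom.2 h𝔪.1) (isSimpleModule_iff_isCoatom.2 h𝔫.1)
  have hbc := Submodule.forall_notMem_le_span_singleton_iff (N := N)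
  exact ⟨⟨fun h _ hm => h.le_span_singleton hiso hm,
    fun hb => isDistribSubmodule_of_forall_le_or_le (hbc.1 hb)⟩, hbc⟩

/-- Over a ring with a unique simple right module up to isomorphism, a proper submodule `N ⊊ M`
is distributive iff `N ⊆ mR` for all `m ∈ M \ N`, iff `N` is comparable with every submodule. -/
theorem isDistribSubmodule_iff_of_unique_simple {R : Type u} [Ring R] {M : Type v}
    [AddCommGroup M] [Module Rᵐᵒᵖ M]
    (hsimple : ∀ (S S' : Type u) [AddCommGroup S] [Module Rᵐᵒᵖ S]
      [AddCommGroup S'] [Module Rᵐᵒᵖ S'], IsSimpleModule Rᵐᵒᵖ S → IsSimpleModule Rᵐᵒᵖ S' →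
      Nonempty (S ≃ₗ[Rᵐᵒᵖ] S'))
    (N : Submodule Rᵐᵒᵖ M) (hN : N ≠ ⊤) :
    (IsDistribSubmodule N ↔
        ∀ m : M, m ∉ N → N ≤ Submodule.span Rᵐᵒᵖ ({m} : Set M)) ∧
    ((∀ m : M, m ∉ N → N ≤ Submodule.span Rᵐᵒᵖ ({m} : Set M)) ↔
        ∀ H : Submodule Rᵐᵒᵖ M, H ≤ N ∨ N ≤ H) :=
  isDistribSubmodule_iff_of_unique_simple_general hsimple N
end

section
/- Let R be a ring such that any two simple right R-modules are isomorphic, let M be a right R-module, and let N be a distributive submodule of M with 0 ≠ N and N ≠ M. Then every simple submodule of M is contained in N (so the socle of M is contained in N), and N is an essential submodule of M. -/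
/-!
Distributivity of `N` with the two cyclic submodules `A(x + n)` and `Ax` shows that, whenever
`N ∩ X = 0`, the annihilators of `n ∈ N` and `x ∈ X` are comaximal. If all simple modules are
isomorphic, then for maximal left ideals `Q ⊇ ann n` and `P ⊇ ann x` an isomorphism
`A/Q ≅ A/P` yields `c ∉ P` with `Q c ⊆ P`; comaximality of `ann n` and `ann (c x)` then
forces `c ∈ P`. So `N` meets every nonzero submodule, in particular contains every simple one.
-/

universe u v

open Submodule

theorem Ideal.exists_notMem_mul_mem_of_linearMap {A : Type*} [Ring A] {Q P : Ideal A}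
    (f : (A ⧸ Q) →ₗ[A] (A ⧸ P)) (hf : f (Submodule.Quotient.mk 1) ≠ 0) :
    ∃ c ∉ P, ∀ r ∈ Q, r * c ∈ P := by
  obtain ⟨c, hc⟩ := Submodule.Quotient.mk_surjective P (f (Submodule.Quotient.mk 1))
  refine ⟨c, fun hcP ↦ hf ?_, fun r hr ↦ ?_⟩
  · rw [← hc, Submodule.Quotient.mk_eq_zero]
    exact hcP
  · have hfr : f (Submodule.Quotient.mk r) = Submodule.Quotient.mk (r * c) := by
      have hr1 : (Submodule.Quotient.mk r : A ⧸ Q) = r • Submodule.Quotient.mk 1 := by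
        rw [← Submodule.Quotient.mk_smul, smul_eq_mul, mul_one]
      rw [hr1, map_smul, ← hc, ← Submodule.Quotient.mk_smul, smul_eq_mul]
    rw [← Submodule.Quotient.mk_eq_zero, ← hfr, (Submodule.Quotient.mk_eq_zero Q).mpr hr,
      map_zero]

section Distrib

variable {A M : Type*} [Ring A] [AddCommGroup M] [Module A M] {N X : Submodule A M}

theorem IsDistribSubmodule.exists_smul_eq_self_smul_eq_zero (hdist : IsDistribSubmodule N)
    (hNX : Disjoint N X) {x n : M} (hx : x ∈ X) (hn : n ∈ N) :
    ∃ t : A, t • x = x ∧ t • n = 0 := by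
  have hxmem : x ∈ N ⊔ (span A {x + n} ⊓ span A {x}) := by
    rw [hdist, mem_inf]
    refine ⟨?_, mem_sup_right (mem_span_singleton_self x)⟩
    simpa using sub_mem (mem_sup_right (mem_span_singleton_self (x + n)))
      (mem_sup_left (T := span A {x + n}) hn)
  obtain ⟨m, hm, z, hz, hmz⟩ := mem_sup.mp hxmem
  obtain ⟨⟨t, htz⟩, ⟨r, hrz⟩⟩ := And.imp mem_span_singleton.mp mem_span_singleton.mp hz
  have htn : t • n = 0 := by
    refine disjoint_def.mp hNX _ (N.smul_mem t hn) ?_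
    have : t • n = r • x - t • x := by
      rw [hrz, ← htz, smul_add]
      abel
    rw [this]
    exact X.sub_mem (X.smul_mem r hx) (X.smul_mem t hx)
  rw [smul_add, htn, add_zero] at htz
  have hm0 : m = 0 := by
    refine disjoint_def.mp hNX m hm ?_
    rw [← add_sub_cancel_right m z, hmz, ← htz]
    exact X.sub_mem hx (X.smul_mem t hx)
  rw [← hmz, hm0, zero_add] at htz ⊢
  exact ⟨t, htz, htn⟩

theorem IsDistribSubmodule.not_disjoint
    (hiso : ∀ Q P : Ideal A, Q.IsMaximal → P.IsMaximal → Nonempty ((A ⧸ Q) ≃ₗ[A] (A ⧸ P)))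
    (hdist : IsDistribSubmodule N) (hN : N ≠ ⊥) (hX : X ≠ ⊥) : ¬ Disjoint N X := by
  intro hNX
  obtain ⟨n, hnN, hn0⟩ := (Submodule.ne_bot_iff N).mp hN
  obtain ⟨x, hxX, hx0⟩ := (Submodule.ne_bot_iff X).mp hX
  obtain ⟨Q, hQ, hnQ⟩ := Ideal.exists_le_maximal _ ((Ideal.torsionOf_eq_top_iff A n).not.mpr hn0)
  obtain ⟨P, hP, hxP⟩ := Ideal.exists_le_maximal _ ((Ideal.torsionOf_eq_top_iff A x).not.mpr hx0)
  obtain ⟨e⟩ := hiso Q P hQ hP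
  have he : e (Submodule.Quotient.mk 1) ≠ 0 := by
    rw [e.map_ne_zero_iff, Ne, Quotient.mk_eq_zero, ← Ideal.eq_top_iff_one]
    exact hQ.ne_top
  obtain ⟨c, hcP, hQcP⟩ := Ideal.exists_notMem_mul_mem_of_linearMap e.toLinearMap he
  obtain ⟨t, htx, htn⟩ :=
    hdist.exists_smul_eq_self_smul_eq_zero hNX (X.smul_mem c hxX) hnN
  have htc : t * c ∈ P := hQcP t (hnQ htn)
  have hc_sub : c - t * c ∈ P := hxP <| by
    rw [Ideal.mem_torsionOf_iff, sub_smul, mul_smul, htx, sub_self]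
  exact hcP (by simpa using P.add_mem hc_sub htc)

end Distrib

theorem socle_le_and_essential_of_distrib_general {R : Type u} [Ring R] {M : Type v}
    [AddCommGroup M] [Module Rᵐᵒᵖ M]
    (hsimple : ∀ (S S' : Type u) [AddCommGroup S] [Module Rᵐᵒᵖ S]
      [AddCommGroup S'] [Module Rᵐᵒᵖ S'], IsSimpleModule Rᵐᵒᵖ S → IsSimpleModule Rᵐᵒᵖ S' →
      Nonempty (S ≃ₗ[Rᵐᵒᵖ] S'))
    (N : Submodule Rᵐᵒᵖ M) (hdist : IsDistribSubmodule N) (hbot : N ≠ ⊥) :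
    (∀ S : Submodule Rᵐᵒᵖ M, IsSimpleModule Rᵐᵒᵖ S → S ≤ N) ∧
    (∀ X : Submodule Rᵐᵒᵖ M, X ≠ ⊥ → N ⊓ X ≠ ⊥) := by
  have hiso (Q P : Ideal Rᵐᵒᵖ) (hQ : Q.IsMaximal) (hP : P.IsMaximal) :
      Nonempty ((Rᵐᵒᵖ ⧸ Q) ≃ₗ[Rᵐᵒᵖ] (Rᵐᵒᵖ ⧸ P)) :=
    hsimple _ _ (isSimpleModule_iff_isCoatom.mpr hQ.out) (isSimpleModule_iff_isCoatom.mpr hP.out)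
  have hmeet (X : Submodule Rᵐᵒᵖ M) (hX : X ≠ ⊥) : ¬ Disjoint N X :=
    hdist.not_disjoint hiso hbot hX
  refine ⟨fun S hS ↦ ?_, fun X hX ↦ disjoint_iff.not.mp (hmeet X hX)⟩
  have hSat : IsAtom S := isSimpleModule_iff_isAtom.mp hS
  exact hSat.not_disjoint_iff_le.mp fun hSN ↦ hmeet S hSat.1 hSN.symm

/-- Over a ring with a unique simple right module up to isomorphism, a nontrivial distributive
submodule `0 ≠ N ⊊ M` contains every simple submodule of `M` (hence the socle of `M`) and is
essential in `M`. -/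
theorem socle_le_and_essential_of_distrib {R : Type u} [Ring R] {M : Type v}
    [AddCommGroup M] [Module Rᵐᵒᵖ M]
    (hsimple : ∀ (S S' : Type u) [AddCommGroup S] [Module Rᵐᵒᵖ S]
      [AddCommGroup S'] [Module Rᵐᵒᵖ S'], IsSimpleModule Rᵐᵒᵖ S → IsSimpleModule Rᵐᵒᵖ S' →
      Nonempty (S ≃ₗ[Rᵐᵒᵖ] S'))
    (N : Submodule Rᵐᵒᵖ M) (hdist : IsDistribSubmodule N) (hbot : N ≠ ⊥) (htop : N ≠ ⊤) :
    (∀ S : Submodule Rᵐᵒᵖ M, IsSimpleModule Rᵐᵒᵖ S → S ≤ N) ∧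
    (∀ X : Submodule Rᵐᵒᵖ M, X ≠ ⊥ → N ⊓ X ≠ ⊥) :=
  socle_le_and_essential_of_distrib_general hsimple N hdist hbot
end

section
/- Let R be a ring, M a right R-module, N a distributive submodule of M, and H a submodule of M with N ⊓ H = ⊥. Then every R-linear map from N to H is zero and every R-linear map from H to N is zero. -/
namespace IsDistribSubmodule

open Submodule

variable {R M : Type*} [Ring R] [AddCommGroup M] [Module R M] {N H : Submodule R M}

theorem mem_span_add_of_disjoint (hdist : IsDistribSubmodule N) (hdisj : Disjoint N H)
    {x y : M} (hx : x ∈ N) (hy : y ∈ H) : y ∈ R ∙ (x + y) := by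
  set S := R ∙ (x + y)
  have hS : N ⊔ S ≤ N ⊔ H :=
    sup_le le_sup_left <| (span_singleton_le_iff_mem _ _).mpr <|
      add_mem (mem_sup_left hx) (mem_sup_right hy)
  have hyNS : y ∈ N ⊔ S := by
    rw [show y = -x + (x + y) by abel]
    exact add_mem (mem_sup_left (neg_mem hx)) (mem_sup_right (mem_span_singleton_self _))
  have hHS : H ⊓ (N ⊔ S) = S ⊓ H :=
    calc H ⊓ (N ⊔ S) = H ⊓ ((N ⊔ S) ⊓ (N ⊔ H)) := by rw [inf_eq_left.mpr hS]
      _ = H ⊓ (N ⊔ S ⊓ H) := by rw [hdist]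
      _ = H ⊓ N ⊔ S ⊓ H := (inf_sup_assoc_of_le N inf_le_right).symm
      _ = S ⊓ H := by rw [hdisj.symm.eq_bot, bot_sup_eq]
  have hy' : y ∈ H ⊓ (N ⊔ S) := ⟨hy, hyNS⟩
  rw [hHS] at hy'
  exact hy'.1

theorem exists_smul_eq_zero_and_smul_eq_self (hdist : IsDistribSubmodule N)
    (hdisj : Disjoint N H) {x y : M} (hx : x ∈ N) (hy : y ∈ H) :
    ∃ r : R, r • x = 0 ∧ r • y = y := by
  obtain ⟨r, hr⟩ := mem_span_singleton.mp (hdist.mem_span_add_of_disjoint hdisj hx hy)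
  have hrx : r • x = y - r • y := eq_sub_of_add_eq (by rw [← smul_add, hr])
  have hrx0 : r • x = 0 := (disjoint_def.mp hdisj) _ (smul_mem _ _ hx)
    (hrx ▸ sub_mem hy (smul_mem _ _ hy))
  exact ⟨r, hrx0, by rwa [hrx0, eq_comm, sub_eq_zero, eq_comm] at hrx⟩

theorem linearMap_to_eq_zero (hdist : IsDistribSubmodule N) (hdisj : Disjoint N H)
    (f : N →ₗ[R] H) : f = 0 := by
  ext x
  obtain ⟨r, hrx, hry⟩ := hdist.exists_smul_eq_zero_and_smul_eq_self hdisj x.2 (f x).2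
  have hrx' : r • x = 0 := Subtype.ext hrx
  calc (f x : M) = r • (f x : M) := hry.symm
    _ = f (r • x) := by rw [map_smul, coe_smul]
    _ = 0 := by rw [hrx', map_zero, ZeroMemClass.coe_zero]

theorem linearMap_from_eq_zero (hdist : IsDistribSubmodule N) (hdisj : Disjoint N H)
    (g : H →ₗ[R] N) : g = 0 := by
  ext y
  obtain ⟨r, hrx, hry⟩ := hdist.exists_smul_eq_zero_and_smul_eq_self hdisj (g y).2 y.2
  have hry' : r • y = y := Subtype.ext hry
  calc (g y : M) = g (r • y) := by rw [hry']
    _ = r • (g y : M) := by rw [map_smul, coe_smul]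
    _ = 0 := hrx

end IsDistribSubmodule

/-- If `N ⊆ M` is distributive and `H ⊆ M` with `N ⊓ H = 0`, then
`Hom(N, H) = 0 = Hom(H, N)`. -/
theorem hom_eq_zero_of_distrib_disjoint {R M : Type*} [Ring R] [AddCommGroup M]
    [Module Rᵐᵒᵖ M] (N H : Submodule Rᵐᵒᵖ M) (hdist : IsDistribSubmodule N)
    (hdisj : N ⊓ H = ⊥) :
    (∀ f : N →ₗ[Rᵐᵒᵖ] H, f = 0) ∧ (∀ g : H →ₗ[Rᵐᵒᵖ] N, g = 0) :=
  ⟨hdist.linearMap_to_eq_zero (disjoint_iff.mpr hdisj),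
    hdist.linearMap_from_eq_zero (disjoint_iff.mpr hdisj)⟩
end

section
/- Let R be a ring and M a right R-module. (1) For every family {Nᵢ | i ∈ I} of distributive submodules of M, the sum ⨆ᵢ Nᵢ is a distributive submodule of M. (2) If N₁ and N₂ are distributive submodules of M, then N₁ ⊓ N₂ is a distributive submodule of M. -/
section

variable {α : Type*}

def IsSupDistrib [Lattice α] (a : α) : Prop :=
  ∀ x y : α, a ⊔ (x ⊓ y) = (a ⊔ x) ⊓ (a ⊔ y)

def IsInfDistrib [Lattice α] (a : α) : Prop :=
  ∀ x y : α, a ⊓ (x ⊔ y) = (a ⊓ x) ⊔ (a ⊓ y)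

section Lattice

variable [Lattice α] {a b : α}

theorem isInfDistrib_toDual_iff : IsInfDistrib (OrderDual.toDual a) ↔ IsSupDistrib a :=
  Iff.rfl

theorem isSupDistrib_toDual_iff : IsSupDistrib (OrderDual.toDual a) ↔ IsInfDistrib a :=
  Iff.rfl

theorem IsSupDistrib.sup (ha : IsSupDistrib a) (hb : IsSupDistrib b) : IsSupDistrib (a ⊔ b) :=
  fun x y => by rw [sup_assoc, hb x y, ha (b ⊔ x) (b ⊔ y), ← sup_assoc, ← sup_assoc]

theorem IsInfDistrib.inf (ha : IsInfDistrib a) (hb : IsInfDistrib b) : IsInfDistrib (a ⊓ b) :=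
  isSupDistrib_toDual_iff.1 <|
    (isSupDistrib_toDual_iff.2 ha).sup (isSupDistrib_toDual_iff.2 hb)

end Lattice

section Modular

variable [Lattice α] [IsModularLattice α] {a : α}

theorem IsSupDistrib.isInfDistrib (h : IsSupDistrib a) : IsInfDistrib a := by
  intro x y
  refine le_antisymm ?_ (sup_le (inf_le_inf_left a le_sup_left) (inf_le_inf_left a le_sup_right))
  have habsorb : a ⊔ x ⊓ (a ⊔ y) = a ⊔ x ⊓ y := by rw [h, h, ← sup_assoc, sup_idem]
  have hx : x ⊓ (a ⊔ y) ≤ y ⊔ x ⊓ a :=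
    calc x ⊓ (a ⊔ y) ≤ (x ⊓ y ⊔ a) ⊓ x :=
          le_inf (sup_comm a (x ⊓ y) ▸ habsorb ▸ le_sup_right) inf_le_left
      _ = x ⊓ y ⊔ a ⊓ x := sup_inf_assoc_of_le a inf_le_left
      _ ≤ y ⊔ x ⊓ a := by rw [inf_comm a x]; exact sup_le_sup_right inf_le_right _
  calc a ⊓ (x ⊔ y) ≤ a ⊓ ((y ⊔ x) ⊓ (a ⊔ y)) :=
        le_inf inf_le_left (le_inf (sup_comm x y ▸ inf_le_right) (inf_le_left.trans le_sup_left))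
    _ = a ⊓ (y ⊔ x ⊓ (a ⊔ y)) := by rw [sup_inf_assoc_of_le x le_sup_right]
    _ ≤ a ⊓ (y ⊔ x ⊓ a) := inf_le_inf_left a (sup_le le_sup_left hx)
    _ = a ⊓ x ⊔ a ⊓ y := by
      rw [sup_comm, inf_comm, sup_inf_assoc_of_le y inf_le_right, inf_comm y, inf_comm x]

theorem IsInfDistrib.isSupDistrib (h : IsInfDistrib a) : IsSupDistrib a :=
  isInfDistrib_toDual_iff.1 (isSupDistrib_toDual_iff.2 h).isInfDistrib

theorem isSupDistrib_iff_isInfDistrib : IsSupDistrib a ↔ IsInfDistrib a :=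
  ⟨IsSupDistrib.isInfDistrib, IsInfDistrib.isSupDistrib⟩

end Modular

theorem isSupDistrib_bot [Lattice α] [OrderBot α] : IsSupDistrib (⊥ : α) := by
  intro x y
  simp only [bot_sup_eq]

theorem isSupDistrib_finset_sup [Lattice α] [OrderBot α] {ι : Type*} {f : ι → α}
    (hf : ∀ i, IsSupDistrib (f i)) (s : Finset ι) : IsSupDistrib (s.sup f) := by
  classical
  induction s using Finset.induction_on with
  | empty => exact isSupDistrib_bot
  | insert i s _ ih => rw [Finset.sup_insert]; exact (hf i).sup ih

section CompactlyGenerated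

variable [CompleteLattice α] [IsCompactlyGenerated α] {ι : Type*} {f : ι → α}

theorem Directed.isInfDistrib_iSup (hdir : Directed (· ≤ ·) f) (hf : ∀ i, IsInfDistrib (f i)) :
    IsInfDistrib (⨆ i, f i) := by
  intro x y
  refine le_antisymm ?_ (sup_le (inf_le_inf_left _ le_sup_left) (inf_le_inf_left _ le_sup_right))
  rw [hdir.iSup_inf_eq]
  refine iSup_le fun i => ?_
  rw [hf i]
  exact sup_le_sup (inf_le_inf_right x (le_iSup f i)) (inf_le_inf_right y (le_iSup f i))

theorem isSupDistrib_iSup [IsModularLattice α] (hf : ∀ i, IsSupDistrib (f i)) :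
    IsSupDistrib (⨆ i, f i) := by
  have hdir : Directed (· ≤ ·) fun s : Finset ι => s.sup f :=
    Monotone.directed_le fun _ _ hst => Finset.sup_mono hst
  rw [iSup_eq_iSup_finset]
  simp_rw [← Finset.sup_eq_iSup]
  exact isSupDistrib_iff_isInfDistrib.2 <|
    hdir.isInfDistrib_iSup fun s => (isSupDistrib_finset_sup hf s).isInfDistrib

end CompactlyGenerated

end

/-- Arbitrary sums of distributive submodules are distributive, and the meet of two
distributive submodules is distributive. -/
theorem iSup_and_inf_isDistribSubmodule {R M : Type*} [Ring R] [AddCommGroup M]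
    [Module Rᵐᵒᵖ M] :
    (∀ {I : Type*} (N : I → Submodule Rᵐᵒᵖ M),
      (∀ i, IsDistribSubmodule (N i)) → IsDistribSubmodule (⨆ i, N i)) ∧
    (∀ N₁ N₂ : Submodule Rᵐᵒᵖ M, IsDistribSubmodule N₁ → IsDistribSubmodule N₂ →
      IsDistribSubmodule (N₁ ⊓ N₂)) :=
  ⟨fun _ hN => isSupDistrib_iSup hN, fun _ _ h₁ h₂ =>
    isSupDistrib_iff_isInfDistrib.2 <|
      (isSupDistrib_iff_isInfDistrib.1 h₁).inf (isSupDistrib_iff_isInfDistrib.1 h₂)⟩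
end

section
/- Let A be a commutative ring, Σ ⊆ A a multiplicatively closed subset (submonoid), and M an A-module. If N is a distributive submodule of M, then the localized submodule Σ⁻¹N of the localized module Σ⁻¹M is a distributive submodule of Σ⁻¹M (as a module over Σ⁻¹A). -/
theorem sup_inf_left_map_of_surjective {F α β : Type*} [Lattice α] [Lattice β] [FunLike F α β]
    [LatticeHomClass F α β] (f : F) (hf : Function.Surjective f) {a : α}
    (ha : ∀ y z : α, a ⊔ (y ⊓ z) = (a ⊔ y) ⊓ (a ⊔ z)) (y z : β) :
    f a ⊔ (y ⊓ z) = (f a ⊔ y) ⊓ (f a ⊔ z) := by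
  obtain ⟨y, rfl⟩ := hf y
  obtain ⟨z, rfl⟩ := hf z
  simp only [← map_inf, ← map_sup, ha]

theorem IsDistribSubmodule.localized' {R : Type*} (S : Type*) {M N : Type*} [CommRing R]
    [CommRing S] [AddCommGroup M] [AddCommGroup N] [Module R M] [Module R N] [Algebra R S]
    [Module S N] [IsScalarTower R S N] (p : Submonoid R) [IsLocalization p S] (f : M →ₗ[R] N)
    [IsLocalizedModule p f] {N' : Submodule R M} (h : IsDistribSubmodule N') :
    IsDistribSubmodule (N'.localized' S p f) :=
  sup_inf_left_map_of_surjective (Submodule.localized'FrameHom S p f)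
    (Submodule.localized'gi S p f).l_surjective h

/-- If `N ⊆ M` is a distributive submodule of an `A`-module `M`, then `Σ⁻¹N ⊆ Σ⁻¹M` is a
distributive submodule over `Σ⁻¹A`. -/
theorem isDistribSubmodule_localized {A M : Type*} [CommRing A] [AddCommGroup M]
    [Module A M] (S : Submonoid A) (N : Submodule A M) (hdist : IsDistribSubmodule N) :
    IsDistribSubmodule (Submodule.localized S N) :=
  IsDistribSubmodule.localized' _ S _ hdist
end

section
/- Let R be a ring, M a right R-module, and N, H submodules of M with N ⊓ H = ⊥ and N ⊔ H = ⊤. Then the following are equivalent: (a) N is a distributive submodule of M; (b) N and H have no isomorphic simple subfactors, i.e., there are no submodules P < Q ≤ N and P' < Q' ≤ H of M with Q/P simple and Q/P ≅ Q'/P'; (c) for every n ∈ N and h ∈ H there exist a, b ∈ R with a + b = 1, n·a = 0 and h·b = 0 (i.e., Ann(n) + Ann(h) = R); (d) every submodule X of M satisfies X = (X ⊓ N) ⊔ (X ⊓ H); (e) H is a distributive submodule of M. -/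
section ModularLattice

variable {α : Type*} [Lattice α] [IsModularLattice α] {a b : α}

theorem eq_inf_sup_inf_of_sup_inf_eq [OrderTop α] (hab : Codisjoint a b)
    (hd : ∀ y₁ y₂, a ⊔ y₁ ⊓ y₂ = (a ⊔ y₁) ⊓ (a ⊔ y₂)) (x : α) : x = x ⊓ a ⊔ x ⊓ b := by
  have hx : x ≤ a ⊔ x ⊓ b := by
    rw [hd, hab.eq_top, inf_top_eq]
    exact le_sup_right
  calc x = (x ⊓ b ⊔ a) ⊓ x := by rw [sup_comm, inf_eq_right.2 hx]
    _ = x ⊓ a ⊔ x ⊓ b := by rw [sup_inf_assoc_of_le _ inf_le_left, inf_comm a, sup_comm]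

theorem sup_inf_eq_of_eq_inf_sup_inf [OrderBot α] (hab : Disjoint a b)
    (hx : ∀ x, x = x ⊓ a ⊔ x ⊓ b) (y₁ y₂ : α) : a ⊔ y₁ ⊓ y₂ = (a ⊔ y₁) ⊓ (a ⊔ y₂) := by
  have hb : ∀ y, (a ⊔ y) ⊓ b = y ⊓ b := fun y => by
    conv_lhs => rw [hx y, ← sup_assoc, sup_eq_left.2 (inf_le_right : y ⊓ a ≤ a), sup_comm,
      sup_inf_assoc_of_le _ inf_le_right, hab.eq_bot, sup_bot_eq]
  refine le_antisymm sup_inf_le ?_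
  set X := (a ⊔ y₁) ⊓ (a ⊔ y₂)
  have hX : X ⊓ b ≤ y₁ ⊓ y₂ := by
    calc X ⊓ b = (a ⊔ y₁) ⊓ b ⊓ ((a ⊔ y₂) ⊓ b) := by rw [inf_inf_distrib_right]
      _ ≤ y₁ ⊓ y₂ := by rw [hb, hb]; exact inf_le_inf inf_le_left inf_le_left
  calc X = X ⊓ a ⊔ X ⊓ b := hx X
    _ ≤ a ⊔ y₁ ⊓ y₂ := sup_le_sup inf_le_right hX

end ModularLattice

theorem isDistribSubmodule_iff_eq_inf_sup_inf {R M : Type*} [Ring R] [AddCommGroup M]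
    [Module R M] {N H : Submodule R M} (h : IsCompl N H) :
    IsDistribSubmodule N ↔ ∀ X : Submodule R M, X = X ⊓ N ⊔ X ⊓ H :=
  ⟨eq_inf_sup_inf_of_sup_inf_eq h.codisjoint, sup_inf_eq_of_eq_inf_sup_inf h.disjoint⟩

open Submodule Ideal

section Module

variable {S M : Type*} [Ring S] [AddCommGroup M] [Module S M] {N H : Submodule S M}

theorem torsionOf_sup_torsionOf_eq_top_iff {x y : M} :
    torsionOf S M x ⊔ torsionOf S M y = ⊤ ↔ ∃ a b : S, a + b = 1 ∧ a • x = 0 ∧ b • y = 0 := by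
  rw [eq_top_iff_one, mem_sup]
  simp only [mem_torsionOf_iff]
  constructor
  · rintro ⟨a, ha, b, hb, hab⟩
    exact ⟨a, b, hab, ha, hb⟩
  · rintro ⟨a, b, hab, ha, hb⟩
    exact ⟨a, ha, b, hb, hab⟩

theorem mem_of_add_mem_of_eq_inf_sup_inf (hd : Disjoint N H) {X : Submodule S M}
    (hX : X = X ⊓ N ⊔ X ⊓ H) {n h : M} (hn : n ∈ N) (hh : h ∈ H) (hx : n + h ∈ X) : n ∈ X := by
  rw [hX, mem_sup] at hx
  obtain ⟨y, ⟨hyX, hyN⟩, z, ⟨-, hzH⟩, hyz⟩ := hx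
  have : n - y = z - h := by rw [sub_eq_sub_iff_add_eq_add, ← hyz, add_comm]
  have hny : n - y = 0 := disjoint_def'.1 hd _ (sub_mem hn hyN) _ (sub_mem hzH hh) this
  rwa [sub_eq_zero.1 hny]

theorem torsionOf_sup_torsionOf_eq_top_of_eq_inf_sup_inf (hd : Disjoint N H)
    (hX : ∀ X : Submodule S M, X = X ⊓ N ⊔ X ⊓ H) {n h : M} (hn : n ∈ N) (hh : h ∈ H) :
    torsionOf S M n ⊔ torsionOf S M h = ⊤ := by
  obtain ⟨c, hc⟩ := mem_span_singleton.1 <|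
    mem_of_add_mem_of_eq_inf_sup_inf hd (hX (S ∙ (n + h))) hn hh (mem_span_singleton_self _)
  have hsplit : (1 - c) • n = c • h := by
    rw [sub_smul, one_smul, sub_eq_iff_eq_add, add_comm, ← smul_add, hc]
  have hcn : (1 - c) • n = 0 :=
    disjoint_def'.1 hd _ (N.smul_mem _ hn) _ (H.smul_mem _ hh) hsplit
  exact torsionOf_sup_torsionOf_eq_top_iff.2 ⟨1 - c, c, sub_add_cancel 1 c, hcn, hsplit ▸ hcn⟩

theorem eq_inf_sup_inf_of_torsionOf_sup_torsionOf_eq_top (hNH : Codisjoint N H)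
    (hc : ∀ n ∈ N, ∀ h ∈ H, torsionOf S M n ⊔ torsionOf S M h = ⊤) (X : Submodule S M) :
    X = X ⊓ N ⊔ X ⊓ H := by
  refine le_antisymm (fun x hx => ?_) (sup_le inf_le_left inf_le_left)
  obtain ⟨n, hn, h, hh, rfl⟩ := mem_sup.1 (hNH.eq_top ▸ mem_top : x ∈ N ⊔ H)
  obtain ⟨a, b, hab, ha, hb⟩ := torsionOf_sup_torsionOf_eq_top_iff.1 (hc n hn h hh)
  have hbx : b • (n + h) = n := by
    rw [smul_add, hb, add_zero, ← zero_add (b • n), ← ha, ← add_smul, hab, one_smul]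
  have hax : a • (n + h) = h := by
    rw [smul_add, ha, zero_add, ← add_zero (a • h), ← hb, ← add_smul, hab, one_smul]
  exact mem_sup.2 ⟨n, ⟨hbx ▸ X.smul_mem b hx, hn⟩, h, ⟨hax ▸ X.smul_mem a hx, hh⟩, rfl⟩

theorem torsionOf_le_torsionOf_map {M' : Type*} [AddCommGroup M'] [Module S M']
    (f : M →ₗ[S] M') (x : M) : torsionOf S M x ≤ torsionOf S M' (f x) := fun c hc => by
  rw [mem_torsionOf_iff] at hc ⊢
  rw [← map_smul, hc, map_zero]

theorem torsionOf_le_torsionOf_mk (P : Submodule S M) {Q : Submodule S M} {x : M}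
    (hx : x ∈ Q) :
    torsionOf S M x ≤ torsionOf S (Q ⧸ P.comap Q.subtype) (Submodule.Quotient.mk ⟨x, hx⟩) :=
  fun c hc => by
    rw [mem_torsionOf_iff] at hc ⊢
    rw [← Submodule.Quotient.mk_smul, show c • (⟨x, hx⟩ : Q) = 0 from Subtype.ext hc,
      Submodule.Quotient.mk_zero]

theorem isEmpty_subfactor_equiv_of_torsionOf_sup_torsionOf_eq_top
    (hc : ∀ n ∈ N, ∀ h ∈ H, torsionOf S M n ⊔ torsionOf S M h = ⊤)
    {P Q P' Q' : Submodule S M} (hPQ : P < Q) (hQN : Q ≤ N) (hQ'H : Q' ≤ H) :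
    IsEmpty ((Q ⧸ P.comap Q.subtype) ≃ₗ[S] (Q' ⧸ P'.comap Q'.subtype)) := by
  refine ⟨fun e => ?_⟩
  obtain ⟨q, hqQ, hqP⟩ := SetLike.exists_of_lt hPQ
  set x : Q ⧸ P.comap Q.subtype := Submodule.Quotient.mk ⟨q, hqQ⟩
  obtain ⟨q', hq'⟩ := Submodule.Quotient.mk_surjective _ (e x)
  have htop : torsionOf S _ x = ⊤ := by
    refine eq_top_iff.2 <| (hc q (hQN hqQ) q' (hQ'H q'.2)).ge.trans <| sup_le
      (torsionOf_le_torsionOf_mk P hqQ) ?_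
    calc torsionOf S M q'
        ≤ torsionOf S _ (Submodule.Quotient.mk (p := P'.comap Q'.subtype) q') :=
          torsionOf_le_torsionOf_mk P' q'.2
      _ = torsionOf S _ (e x) := by rw [hq']
      _ ≤ torsionOf S _ x := by simpa using torsionOf_le_torsionOf_map e.symm.toLinearMap (e x)
  rw [torsionOf_eq_top_iff, Submodule.Quotient.mk_eq_zero] at htop
  exact hqP htop

theorem exists_lt_span_singleton_quotient_equiv {m : M} {I : Ideal S}
    (hm : torsionOf S M m ≤ I) (hI : I ≠ ⊤) :
    ∃ P < S ∙ m, Nonempty (((S ∙ m) ⧸ P.comap (S ∙ m).subtype) ≃ₗ[S] (S ⧸ I)) := by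
  set e := quotTorsionOfEquivSpanSingleton S M m
  set P' : Submodule S (S ∙ m) := (Submodule.map (torsionOf S M m).mkQ I).map (e : _ →ₗ[S] _)
  have e' : ((S ∙ m) ⧸ P') ≃ₗ[S] (S ⧸ I) :=
    (Submodule.Quotient.equiv _ _ e.symm (by rw [map_symm_eq_iff])).trans
      (quotientQuotientEquivQuotient _ _ hm)
  have hP' : (P'.map (S ∙ m).subtype).comap (S ∙ m).subtype = P' :=
    comap_map_eq_of_injective (subtype_injective _) _
  refine ⟨P'.map (S ∙ m).subtype, lt_of_le_of_ne (map_subtype_le _ _) fun h => ?_,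
    ⟨(quotEquivOfEq _ _ hP').trans e'⟩⟩
  have : Nontrivial (S ⧸ I) := Submodule.Quotient.nontrivial_iff.2 hI
  have : Nontrivial ((S ∙ m) ⧸ P') := e'.symm.injective.nontrivial
  exact Submodule.Quotient.nontrivial_iff.1 this (by rw [← hP', h, comap_subtype_self])

theorem exists_simple_subfactors_of_torsionOf_sup_torsionOf_ne_top {n h : M} (hn : n ∈ N)
    (hh : h ∈ H)
    (hnh : torsionOf S M n ⊔ torsionOf S M h ≠ ⊤) :
    ∃ P Q P' Q' : Submodule S M, P < Q ∧ Q ≤ N ∧ P' < Q' ∧ Q' ≤ H ∧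
      IsSimpleModule S (Q ⧸ P.comap Q.subtype) ∧
      Nonempty ((Q ⧸ P.comap Q.subtype) ≃ₗ[S] (Q' ⧸ P'.comap Q'.subtype)) := by
  obtain ⟨𝔪, h𝔪, hle⟩ := exists_le_maximal _ hnh
  obtain ⟨P, hP, ⟨e⟩⟩ :=
    exists_lt_span_singleton_quotient_equiv (le_sup_left.trans hle) h𝔪.ne_top
  obtain ⟨P', hP', ⟨e'⟩⟩ :=
    exists_lt_span_singleton_quotient_equiv (le_sup_right.trans hle) h𝔪.ne_top
  have : IsSimpleModule S (S ⧸ 𝔪) := isSimpleModule_iff_isCoatom.2 h𝔪.1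
  exact ⟨P, _, P', _, hP, span_singleton_le_iff_mem _ _ |>.2 hn, hP',
    span_singleton_le_iff_mem _ _ |>.2 hh, IsSimpleModule.congr e, ⟨e.trans e'.symm⟩⟩

end Module

/-- For a direct sum `M = N ⊕ H`, the following are equivalent: `N` is distributive; `N` and
`H` have no isomorphic simple subfactors; `Ann(n) + Ann(h) = R` for all `n ∈ N`, `h ∈ H`;
every submodule `X` satisfies `X = (X ⊓ N) ⊔ (X ⊓ H)`; `H` is distributive. -/
theorem latticeDecomposition_tfae {R M : Type*} [Ring R] [AddCommGroup M]
    [Module Rᵐᵒᵖ M] (N H : Submodule Rᵐᵒᵖ M) (hdisj : N ⊓ H = ⊥) (hsup : N ⊔ H = ⊤) :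
    List.TFAE
      [ IsDistribSubmodule N,
        ¬ ∃ P Q P' Q' : Submodule Rᵐᵒᵖ M, P < Q ∧ Q ≤ N ∧ P' < Q' ∧ Q' ≤ H ∧
          IsSimpleModule Rᵐᵒᵖ (Q ⧸ Submodule.comap Q.subtype P) ∧
          Nonempty ((Q ⧸ Submodule.comap Q.subtype P) ≃ₗ[Rᵐᵒᵖ]
            (Q' ⧸ Submodule.comap Q'.subtype P')),
        ∀ n ∈ N, ∀ h ∈ H, ∃ a b : R, a + b = 1 ∧
          (MulOpposite.op a) • n = (0 : M) ∧ (MulOpposite.op b) • h = (0 : M),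
        ∀ X : Submodule Rᵐᵒᵖ M, X = (X ⊓ N) ⊔ (X ⊓ H),
        IsDistribSubmodule H ] := by
  have hNH : IsCompl N H := ⟨disjoint_iff.2 hdisj, codisjoint_iff.2 hsup⟩
  have hcoprime : (∀ n ∈ N, ∀ h ∈ H, ∃ a b : R, a + b = 1 ∧
      (MulOpposite.op a) • n = (0 : M) ∧ (MulOpposite.op b) • h = (0 : M)) ↔
      ∀ n ∈ N, ∀ h ∈ H, torsionOf Rᵐᵒᵖ M n ⊔ torsionOf Rᵐᵒᵖ M h = ⊤ := by
    simp only [torsionOf_sup_torsionOf_eq_top_iff, MulOpposite.op_surjective.exists,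
      ← MulOpposite.op_add, MulOpposite.op_eq_one_iff]
  tfae_have 1 ↔ 4 := isDistribSubmodule_iff_eq_inf_sup_inf hNH
  tfae_have 5 ↔ 4 := by
    simp_rw [isDistribSubmodule_iff_eq_inf_sup_inf hNH.symm, sup_comm]
  tfae_have 3 → 4 := fun hc =>
    eq_inf_sup_inf_of_torsionOf_sup_torsionOf_eq_top hNH.codisjoint (hcoprime.1 hc)
  tfae_have 4 → 3 := fun hX => hcoprime.2 fun _ hn _ hh =>
    torsionOf_sup_torsionOf_eq_top_of_eq_inf_sup_inf hNH.disjoint hX hn hh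
  tfae_have 3 → 2 := fun hc ⟨_, _, _, _, hPQ, hQN, _, hQ'H, _, ⟨e⟩⟩ =>
    (isEmpty_subfactor_equiv_of_torsionOf_sup_torsionOf_eq_top (hcoprime.1 hc) hPQ hQN hQ'H).false e
  tfae_have 2 → 3 := fun hsimple => hcoprime.2 fun _ hn _ hh => by
    by_contra hnh
    exact hsimple (exists_simple_subfactors_of_torsionOf_sup_torsionOf_ne_top hn hh hnh)
  tfae_finish
end

section
/- Let A be a commutative ring, M an A-module, and N, H submodules of M with N ⊓ H = ⊥ and N ⊔ H = ⊤. Then the following are equivalent: (a) N is a distributive submodule of M; (b) the supports of N and H are disjoint, Supp(N) ∩ Supp(H) = ∅; (c) H is a distributive submodule of M. -/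
section Support

variable {A P Q : Type*} [CommRing A] [AddCommGroup P] [Module A P] [AddCommGroup Q] [Module A Q]

theorem exists_smul_eq_zero_and_one_sub_smul_eq_zero_iff (x : P) (y : Q) :
    (∃ a : A, a • x = 0 ∧ (1 - a) • y = 0) ↔
      (A ∙ x).annihilator ⊔ (A ∙ y).annihilator = ⊤ := by
  rw [Ideal.eq_top_iff_one, Submodule.mem_sup]
  simp only [Submodule.mem_annihilator_span_singleton]
  constructor
  · rintro ⟨a, hax, hay⟩
    exact ⟨a, hax, 1 - a, hay, add_sub_cancel a 1⟩
  · rintro ⟨a, hax, b, hby, hab⟩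
    exact ⟨a, hax, by rwa [← hab, add_sub_cancel_left]⟩

theorem Module.support_inter_eq_empty_iff :
    Module.support A P ∩ Module.support A Q = ∅ ↔
      ∀ (x : P) (y : Q), (A ∙ x).annihilator ⊔ (A ∙ y).annihilator = ⊤ := by
  simp only [Set.eq_empty_iff_forall_notMem, Set.mem_inter_iff,
    Module.mem_support_iff_exists_annihilator, not_and, not_exists]
  constructor
  · intro h x y
    by_contra hne
    obtain ⟨p, hp, hle⟩ := Ideal.exists_le_maximal _ hne
    exact h ⟨p, hp.isPrime⟩ ⟨x, le_sup_left.trans hle⟩ y (le_sup_right.trans hle)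
  · rintro h p ⟨x, hx⟩ y hy
    exact p.isPrime.ne_top (top_le_iff.mp (h x y ▸ sup_le hx hy))

end Support

section Distrib

variable {A M : Type*} [CommRing A] [AddCommGroup M] [Module A M] {N H : Submodule A M}

theorem Submodule.support_inter_eq_empty_iff :
    Module.support A N ∩ Module.support A H = ∅ ↔
      ∀ x ∈ N, ∀ y ∈ H, ∃ a : A, a • x = 0 ∧ (1 - a) • y = 0 := by
  simp only [Module.support_inter_eq_empty_iff, ← exists_smul_eq_zero_and_one_sub_smul_eq_zero_iff,
    Subtype.forall, ← Submodule.coe_eq_zero, Submodule.coe_smul]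

theorem isDistribSubmodule_of_forall_exists_smul (hsup : N ⊔ H = ⊤)
    (h : ∀ x ∈ N, ∀ y ∈ H, ∃ a : A, a • x = 0 ∧ (1 - a) • y = 0) :
    IsDistribSubmodule N := by
  intro Y₁ Y₂
  refine le_antisymm (le_inf (sup_le_sup_left inf_le_left N) (sup_le_sup_left inf_le_right N)) ?_
  rintro m ⟨hm₁, hm₂⟩
  obtain ⟨n₁, hn₁, u₁, hu₁, rfl⟩ := Submodule.mem_sup.mp hm₁
  obtain ⟨n₂, hn₂, u₂, hu₂, hm⟩ := Submodule.mem_sup.mp hm₂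
  obtain ⟨n₀, hn₀, v, hv, hnv⟩ := Submodule.mem_sup.mp (hsup ▸ Submodule.mem_top (x := n₁ + u₁))
  have hu : u₁ - u₂ ∈ N := by
    rw [show u₁ - u₂ = n₂ - n₁ by linear_combination (norm := abel) -hm]
    exact sub_mem hn₂ hn₁
  obtain ⟨a, hau, hav⟩ := h _ hu v hv
  have hY : a • u₁ ∈ Y₁ ⊓ Y₂ := by
    rw [smul_sub, sub_eq_zero] at hau
    exact ⟨Y₁.smul_mem a hu₁, hau ▸ Y₂.smul_mem a hu₂⟩
  -- `1 - a` kills the `H`-component `v`, so `(1 - a) • m = (1 - a) • n₀`.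
  have hm_eq : n₁ + u₁ = ((1 - a) • n₀ + a • n₁) + a • u₁ := by
    have : (1 - a) • (n₀ + v) = (1 - a) • n₀ := by rw [smul_add, hav, add_zero]
    rw [hnv] at this
    linear_combination (norm := module) this
  rw [hm_eq]
  exact Submodule.add_mem_sup (add_mem (N.smul_mem _ hn₀) (N.smul_mem _ hn₁)) hY

theorem IsDistribSubmodule.exists_smul (hdisj : N ⊓ H = ⊥) (hN : IsDistribSubmodule N)
    {x y : M} (hx : x ∈ N) (hy : y ∈ H) : ∃ a : A, a • x = 0 ∧ (1 - a) • y = 0 := by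
  have hy_mem : y ∈ N ⊔ ((A ∙ (x + y)) ⊓ (A ∙ y)) := by
    rw [hN]
    refine ⟨Submodule.mem_sup.mpr ⟨-x, neg_mem hx, x + y, Submodule.mem_span_singleton_self _,
      neg_add_cancel_left x y⟩, Submodule.mem_sup_right (Submodule.mem_span_singleton_self _)⟩
  obtain ⟨n, hn, z, ⟨hz₁, hz₂⟩, hnz⟩ := Submodule.mem_sup.mp hy_mem
  obtain ⟨c, rfl⟩ := Submodule.mem_span_singleton.mp hz₁
  obtain ⟨b, hbc⟩ := Submodule.mem_span_singleton.mp hz₂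
  have mem_bot {w : M} (hwN : w ∈ N) (hwH : w ∈ H) : w = 0 := by
    simpa [hdisj] using Submodule.mem_inf.mpr ⟨hwN, hwH⟩
  have hcx : c • x = 0 := by
    refine mem_bot (N.smul_mem c hx) ?_
    rw [show c • x = (b - c) • y by linear_combination (norm := module) -hbc]
    exact H.smul_mem _ hy
  refine ⟨c, hcx, mem_bot ?_ (H.smul_mem _ hy)⟩
  rw [show (1 - c) • y = n by linear_combination (norm := module) hcx - hnz]
  exact hn

theorem isDistribSubmodule_iff_support_inter_eq_empty (hdisj : N ⊓ H = ⊥) (hsup : N ⊔ H = ⊤) :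
    IsDistribSubmodule N ↔ Module.support A N ∩ Module.support A H = ∅ := by
  rw [Submodule.support_inter_eq_empty_iff]
  exact ⟨fun hN _ hx _ hy ↦ hN.exists_smul hdisj hx hy,
    isDistribSubmodule_of_forall_exists_smul hsup⟩

end Distrib

/-- For a direct sum decomposition `M = N ⊕ H` of a module over a commutative ring `A`,
`N` is distributive iff `Supp(N) ∩ Supp(H) = ∅` iff `H` is distributive. -/
theorem latticeDecomposition_iff_disjoint_support {A M : Type*} [CommRing A]
    [AddCommGroup M] [Module A M] (N H : Submodule A M)
    (hdisj : N ⊓ H = ⊥) (hsup : N ⊔ H = ⊤) :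
    List.TFAE
      [ IsDistribSubmodule N,
        Module.support A N ∩ Module.support A H = ∅,
        IsDistribSubmodule H ] := by
  tfae_have 1 ↔ 2 := isDistribSubmodule_iff_support_inter_eq_empty hdisj hsup
  tfae_have 3 ↔ 2 := by
    rw [Set.inter_comm]
    exact isDistribSubmodule_iff_support_inter_eq_empty (inf_comm N H ▸ hdisj) (sup_comm N H ▸ hsup)
  tfae_finish
end

section
/- Let R be a ring, M a right R-module, and e : M → M an R-linear endomorphism with e ∘ e = e; set N := range(e) (so N is a direct summand of M with complement ker(e)). Then the following are equivalent: (a) N is a distributive submodule of M; (b) e is central in the endomorphism ring of M (e ∘ f = f ∘ e for every R-linear endomorphism f of M) and e(X) ⊆ X for every submodule X of M. -/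
open Submodule LinearMap

section Idempotent

variable {R M : Type*} [Ring R] [AddCommGroup M] [Module R M] {e : Module.End R M}

theorem sub_apply_mem_of_mem_range_sup (he : IsIdempotentElem e) {Y : Submodule R M}
    (hY : Y.map e ≤ Y) {x : M} (hx : x ∈ range e ⊔ Y) : x - e x ∈ Y := by
  obtain ⟨n, hn, y, hy, rfl⟩ := mem_sup.1 hx
  have hsub : n + y - e (n + y) = y - e y := by
    rw [map_add, he.mem_range_iff.1 hn, add_sub_add_left_eq_sub]
  exact hsub ▸ sub_mem hy (hY ⟨y, hy, rfl⟩)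

theorem isDistribSubmodule_range_of_forall_map_le (he : IsIdempotentElem e)
    (h : ∀ X : Submodule R M, X.map e ≤ X) : IsDistribSubmodule (range e) := by
  refine fun Y₁ Y₂ ↦ le_antisymm sup_inf_le fun x hx ↦ mem_sup.2 ⟨e x, mem_range_self e x,
    x - e x, ⟨?_, ?_⟩, add_sub_cancel _ _⟩
  · exact sub_apply_mem_of_mem_range_sup he (h Y₁) (mem_inf.1 hx).1
  · exact sub_apply_mem_of_mem_range_sup he (h Y₂) (mem_inf.1 hx).2

theorem map_le_of_isDistribSubmodule_range (he : IsIdempotentElem e)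
    (hd : IsDistribSubmodule (range e)) (X : Submodule R M) : X.map e ≤ X := by
  rintro _ ⟨x, hx, rfl⟩
  have hsplit : x ∈ range e ⊔ (X ⊓ ker e) := by
    rw [hd, he.isCompl.sup_eq_top, inf_top_eq]
    exact mem_sup_right hx
  obtain ⟨n, hn, k, ⟨hkX, hk⟩, rfl⟩ := mem_sup.1 hsplit
  have hek : e (n + k) = n + k - k := by
    rw [map_add, he.mem_range_iff.1 hn, mem_ker.1 hk, add_sub_cancel_right, add_zero]
  exact hek ▸ sub_mem hx hkX

theorem forall_map_one_sub_le (h : ∀ X : Submodule R M, X.map e ≤ X) (X : Submodule R M) :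
    X.map (1 - e) ≤ X := by
  rintro _ ⟨x, hx, rfl⟩
  exact sub_mem hx (h X ⟨x, hx, rfl⟩)

theorem range_mem_invtSubmodule_of_forall_map_le (he : IsIdempotentElem e)
    (h : ∀ X : Submodule R M, X.map e ≤ X) (f : Module.End R M) :
    range e ∈ Module.End.invtSubmodule f := by
  set g := (1 - e) * f * e
  have hee : ∀ y, e (e y) = e y := LinearMap.congr_fun he.eq
  have heg : e * g = 0 := by simp only [g, ← mul_assoc, he.mul_one_sub_self, zero_mul]
  have hge : g * e = g := by simp only [g, mul_assoc, he.eq]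
  have hep : ∀ y, e ((e + g) y) = e y := fun y ↦ by
    rw [LinearMap.add_apply, map_add, hee, ← Module.End.mul_apply, heg, LinearMap.zero_apply,
      add_zero]
  have hpe : ∀ y, (e + g) (e y) = (e + g) y := fun y ↦ by
    rw [LinearMap.add_apply, LinearMap.add_apply, hee, ← Module.End.mul_apply, hge]
  have hg : g = 0 := by
    ext x
    obtain ⟨z, hz⟩ := h (range (e + g)) ⟨(e + g) x, mem_range_self _ x, rfl⟩
    have hez : e z = e x := by rw [← hep z, hz, hee, hep]
    have hpx : (e + g) x = e x := by
      calc (e + g) x = (e + g) (e z) := by rw [hez, hpe]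
        _ = e x := by rw [hpe, hz, hep]
    simpa using hpx
  rw [he.range_mem_invtSubmodule_iff, ← Module.End.mul_eq_comp, ← Module.End.mul_eq_comp,
    ← mul_assoc, eq_comm, ← sub_eq_zero, ← sub_mul, ← one_sub_mul]
  exact hg

theorem commute_of_forall_map_le (he : IsIdempotentElem e)
    (h : ∀ X : Submodule R M, X.map e ≤ X) (f : Module.End R M) : Commute e f :=
  he.commute_iff.2 ⟨range_mem_invtSubmodule_of_forall_map_le he h f,
    he.ker_eq_range_one_sub ▸
      range_mem_invtSubmodule_of_forall_map_le he.one_sub (forall_map_one_sub_le h) f⟩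

end Idempotent

/-- For an idempotent endomorphism `e` of `M` with `N = e(M)`, the direct summand `N` is
distributive iff `e` is central in `End_R(M)` and stabilizes every submodule of `M`. -/
theorem isDistribSubmodule_range_iff_central_fullyInvariant {R M : Type*} [Ring R]
    [AddCommGroup M] [Module Rᵐᵒᵖ M] (e : M →ₗ[Rᵐᵒᵖ] M) (he : e ∘ₗ e = e) :
    IsDistribSubmodule (LinearMap.range e) ↔
      ((∀ f : M →ₗ[Rᵐᵒᵖ] M, e ∘ₗ f = f ∘ₗ e) ∧
        ∀ X : Submodule Rᵐᵒᵖ M, Submodule.map e X ≤ X) := by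
  have he : IsIdempotentElem e := he
  refine ⟨fun hd ↦ ?_, fun ⟨_, h⟩ ↦ isDistribSubmodule_range_of_forall_map_le he h⟩
  have h := map_le_of_isDistribSubmodule_range he hd
  exact ⟨fun f ↦ (commute_of_forall_map_le he h f).eq, h⟩
end

section
/- Let R be a ring, M a right R-module, and N a complemented distributive submodule of M (i.e., N is distributive and has a complement H with N ⊓ H = ⊥, N ⊔ H = ⊤). Then N is stable under every R-linear endomorphism of M: f(N) ⊆ N for all f : M → M R-linear, i.e., N is a fully invariant submodule. -/
section

variable {R M : Type*} [Ring R] [AddCommGroup M] [Module R M] {N H : Submodule R M}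

theorem IsDistribSubmodule.le_of_codisjoint_of_disjoint (hN : IsDistribSubmodule N)
    (hNH : Codisjoint N H) {Y : Submodule R M} (hYH : Disjoint Y H) : Y ≤ N :=
  calc Y ≤ N ⊔ Y := le_sup_right
    _ = (N ⊔ Y) ⊓ (N ⊔ H) := by rw [hNH.eq_top, inf_top_eq]
    _ = N ⊔ (Y ⊓ H) := (hN Y H).symm
    _ = N := by rw [hYH.eq_bot, sup_bot_eq]

theorem Submodule.disjoint_map_id_add (hNH : Disjoint N H) {g : M →ₗ[R] M}
    (hg : LinearMap.range g ≤ H) : Disjoint (N.map (LinearMap.id + g)) H := by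
  rw [Submodule.disjoint_def]
  rintro _ ⟨x, hxN, rfl⟩ hxH
  have hgx : g x ∈ H := hg (LinearMap.mem_range_self g x)
  have hx : x ∈ H := by
    simpa using H.sub_mem hxH hgx
  rw [Submodule.disjoint_def.1 hNH x hxN hx, map_zero]

theorem IsDistribSubmodule.le_ker_of_range_le (hN : IsDistribSubmodule N) (hNH : IsCompl N H)
    {g : M →ₗ[R] M} (hg : LinearMap.range g ≤ H) : N ≤ LinearMap.ker g := by
  intro x hxN
  have hY : N.map (LinearMap.id + g) ≤ N :=
    hN.le_of_codisjoint_of_disjoint hNH.codisjoint (Submodule.disjoint_map_id_add hNH.disjoint hg)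
  have hgxN : g x ∈ N := by
    simpa using N.sub_mem (hY (Submodule.mem_map_of_mem hxN)) hxN
  exact Submodule.disjoint_def.1 hNH.disjoint _ hgxN (hg (LinearMap.mem_range_self g x))

end

/-- Every complemented distributive submodule `N ⊆ M` is stable under every endomorphism
of `M`, i.e., it is fully invariant. -/
theorem complemented_distrib_fullyInvariant {R M : Type*} [Ring R] [AddCommGroup M]
    [Module Rᵐᵒᵖ M] (N : Submodule Rᵐᵒᵖ M) (hdist : IsDistribSubmodule N)
    (H : Submodule Rᵐᵒᵖ M) (hdisj : N ⊓ H = ⊥) (hsup : N ⊔ H = ⊤) :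
    ∀ f : M →ₗ[Rᵐᵒᵖ] M, Submodule.map f N ≤ N := by
  intro f
  have hNH : IsCompl N H := ⟨disjoint_iff.2 hdisj, codisjoint_iff.2 hsup⟩
  let π := H.projection N hNH.symm
  have hker : N ≤ LinearMap.ker (π ∘ₗ f) :=
    hdist.le_ker_of_range_le hNH
      ((LinearMap.range_comp_le_range f π).trans (Submodule.range_projection _).le)
  rintro _ ⟨x, hxN, rfl⟩
  exact (Submodule.projection_apply_eq_zero_iff hNH.symm).1 (hker hxN)
end

section
/- Let R be a ring and e ∈ R an idempotent (e·e = e). Then the right ideal e·R is a distributive submodule of R regarded as a right R-module if and only if e is central in R (note e·R is always complemented by (1-e)·R). Moreover, for any two-sided ideals a, b of R with a ⊓ b = ⊥ and a ⊔ b = ⊤ as right ideals (R = a ⊕ b), the right ideal a is a distributive submodule of R, i.e., every such decomposition of R into two-sided ideals is a lattice decomposition. -/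
namespace IsDistribSubmodule

variable {S M : Type*} [Ring S] [AddCommGroup M] [Module S M] {N : Submodule S M}

theorem of_addMonoidHom (p : M →+ M) (hsub : ∀ x, x - p x ∈ N) (hker : ∀ x ∈ N, p x = 0)
    (hmaps : ∀ (Y : Submodule S M), ∀ y ∈ Y, p y ∈ Y) : IsDistribSubmodule N := by
  intro Y₁ Y₂
  refine le_antisymm sup_inf_le ?_
  rintro x ⟨hx₁, hx₂⟩
  have hp : ∀ Y : Submodule S M, x ∈ N ⊔ Y → p x ∈ Y := by
    intro Y hx
    obtain ⟨n, hn, y, hy, rfl⟩ := Submodule.mem_sup.mp hx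
    rw [map_add, hker n hn, zero_add]
    exact hmaps Y y hy
  exact Submodule.mem_sup.mpr ⟨x - p x, hsub x, p x, ⟨hp Y₁ hx₁, hp Y₂ hx₂⟩, sub_add_cancel _ _⟩

theorem le_sup_inf_of_sup_eq_top (hN : IsDistribSubmodule N) {H : Submodule S M}
    (hNH : N ⊔ H = ⊤) (Y : Submodule S M) : Y ≤ N ⊔ (H ⊓ Y) := by
  rw [hN, hNH, top_inf_eq]
  exact le_sup_right

end IsDistribSubmodule

section Ring

variable {R : Type*} [Ring R]

theorem mem_span_mop_singleton {x y : R} :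
    x ∈ Submodule.span Rᵐᵒᵖ {y} ↔ ∃ t : R, y * t = x := by
  simp [Submodule.mem_span_singleton, MulOpposite.op_surjective.exists]

theorem IsIdempotentElem.mem_span_mop_singleton_iff {u x : R} (hu : IsIdempotentElem u) :
    x ∈ Submodule.span Rᵐᵒᵖ {u} ↔ u * x = x := by
  refine mem_span_mop_singleton.trans ⟨?_, fun h => ⟨x, h⟩⟩
  rintro ⟨t, rfl⟩
  rw [← mul_assoc, hu.eq]

theorem span_mop_singleton_sup_one_sub_eq_top (e : R) :
    Submodule.span Rᵐᵒᵖ {e} ⊔ Submodule.span Rᵐᵒᵖ {1 - e} = ⊤ := by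
  refine eq_top_iff.mpr fun x _ => Submodule.mem_sup.mpr
    ⟨e * x, mem_span_mop_singleton.mpr ⟨x, rfl⟩, (1 - e) * x, mem_span_mop_singleton.mpr ⟨x, rfl⟩, ?_⟩
  rw [← add_mul, add_sub_cancel, one_mul]

theorem IsIdempotentElem.add_of_mul_eq_self_of_mul_eq_zero {p x : R} (hp : IsIdempotentElem p)
    (hxp : x * p = x) (hpx : p * x = 0) : IsIdempotentElem (p + x) := by
  have hxx : x * x = 0 := by rw [← mul_zero x, ← hpx, ← mul_assoc, hxp]
  rw [IsIdempotentElem, mul_add, add_mul, add_mul, hp.eq, hxp, hpx, hxx, zero_add, add_zero]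

theorem isDistribSubmodule_span_of_commute {e : R} (he : IsIdempotentElem e)
    (hc : ∀ r, Commute e r) : IsDistribSubmodule (Submodule.span Rᵐᵒᵖ {e}) := by
  refine .of_addMonoidHom (AddMonoidHom.mulLeft (1 - e)) (fun x => ?_) (fun x hx => ?_)
    (fun Y y hy => ?_)
  · exact mem_span_mop_singleton.mpr ⟨x, by simp [sub_mul]⟩
  · obtain ⟨t, rfl⟩ := mem_span_mop_singleton.mp hx
    simp [← mul_assoc, he.one_sub_mul_self]
  · have : (1 - e) * y = y * (1 - e) := ((Commute.one_left y).sub_left (hc y)).eq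
    rw [AddMonoidHom.coe_mulLeft, this, ← op_smul_eq_mul]
    exact Y.smul_mem _ hy

theorem IsDistribSubmodule.one_sub_mul_mem {e : R} (he : IsIdempotentElem e)
    (hd : IsDistribSubmodule (Submodule.span Rᵐᵒᵖ {e})) {Y : Submodule Rᵐᵒᵖ R} {y : R}
    (hy : y ∈ Y) : (1 - e) * y ∈ Y := by
  obtain ⟨n, hn, z, ⟨hz, hzY⟩, rfl⟩ :=
    Submodule.mem_sup.mp (hd.le_sup_inf_of_sup_eq_top (span_mop_singleton_sup_one_sub_eq_top e) Y hy)
  obtain ⟨s, rfl⟩ := mem_span_mop_singleton.mp hn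
  obtain ⟨t, rfl⟩ := mem_span_mop_singleton.mp hz
  rwa [mul_add, ← mul_assoc, he.one_sub_mul_self, zero_mul, zero_add, ← mul_assoc, he.one_sub.eq]

theorem IsIdempotentElem.commute_of_forall_mul_mem {f : R} (hf : IsIdempotentElem f)
    (h : ∀ (Y : Submodule Rᵐᵒᵖ R), ∀ y ∈ Y, f * y ∈ Y) (r : R) : Commute f r := by
  set e := 1 - f
  have hef : e * f = 0 := hf.one_sub_mul_self
  have hfe : f * e = 0 := hf.mul_one_sub_self
  have hee : e * e = e := hf.one_sub.eq
  have hfu : ∀ u, IsIdempotentElem u → u * (f * u) = f * u := fun u hu =>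
    hu.mem_span_mop_singleton_iff.mp (h _ u (Submodule.mem_span_singleton_self u))
  have hfre : f * r * e = 0 := by
    have hu := hf.one_sub.add_of_mul_eq_self_of_mul_eq_zero (x := f * r * e)
      (by rw [mul_assoc, hee]) (by rw [← mul_assoc, ← mul_assoc, hef, zero_mul, zero_mul])
    have hfu' : f * (e + f * r * e) = f * r * e := by
      rw [mul_add, hfe, zero_add, ← mul_assoc, ← mul_assoc, hf.eq]
    have huf : (e + f * r * e) * f = 0 := by rw [add_mul, hef, mul_assoc, hef, mul_zero, add_zero]
    rw [← hfu', ← hfu _ hu, hfu', ← mul_assoc, ← mul_assoc, huf, zero_mul, zero_mul]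
  have herf : e * r * f = 0 := by
    have hu := hf.add_of_mul_eq_self_of_mul_eq_zero (x := e * r * f)
      (by rw [mul_assoc, hf.eq]) (by rw [← mul_assoc, ← mul_assoc, hfe, zero_mul, zero_mul])
    have hfu' : f * (f + e * r * f) = f := by
      rw [mul_add, hf.eq, ← mul_assoc, ← mul_assoc, hfe, zero_mul, zero_mul, add_zero]
    have huf : (f + e * r * f) * f = f + e * r * f := by rw [add_mul, hf.eq, mul_assoc, hf.eq]
    have := hfu _ hu
    rw [hfu', huf] at this
    exact add_eq_left.mp this
  calc f * r = f * r * (e + f) := by rw [sub_add_cancel, mul_one]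
    _ = (e + f) * r * f := by rw [mul_add, hfre, zero_add, add_mul, add_mul, herf, zero_add]
    _ = r * f := by rw [sub_add_cancel, one_mul]

theorem isDistribSubmodule_span_mop_singleton_iff {e : R} (he : IsIdempotentElem e) :
    IsDistribSubmodule (Submodule.span Rᵐᵒᵖ {e}) ↔ ∀ r, Commute e r := by
  refine ⟨fun hd r => ?_, isDistribSubmodule_span_of_commute he⟩
  have := he.one_sub.commute_of_forall_mul_mem (fun Y y hy => hd.one_sub_mul_mem he hy) r
  simpa using (Commute.one_left r).sub_left this

theorem exists_isIdempotentElem_commute_eq_span_of_twoSided {a b : Submodule Rᵐᵒᵖ R}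
    (ha : ∀ r x : R, x ∈ a → r * x ∈ a) (hb : ∀ r x : R, x ∈ b → r * x ∈ b)
    (hinf : a ⊓ b = ⊥) (hsup : a ⊔ b = ⊤) :
    ∃ f : R, IsIdempotentElem f ∧ (∀ r, Commute f r) ∧ a = Submodule.span Rᵐᵒᵖ {f} := by
  have hab : ∀ x ∈ a, ∀ y ∈ b, x * y = 0 := fun x hx y hy =>
    Submodule.disjoint_def.mp (disjoint_iff.mpr hinf) _
      (by rw [← op_smul_eq_mul]; exact a.smul_mem _ hx) (hb x y hy)
  have hba : ∀ y ∈ b, ∀ x ∈ a, y * x = 0 := fun y hy x hx =>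
    Submodule.disjoint_def.mp (disjoint_iff.mpr hinf) _
      (ha y x hx) (by rw [← op_smul_eq_mul]; exact b.smul_mem _ hy)
  obtain ⟨f, hf, g, hg, hfg⟩ := Submodule.mem_sup.mp (hsup ▸ Submodule.mem_top : (1 : R) ∈ a ⊔ b)
  have hfr : ∀ r, f * r ∈ a := fun r => by rw [← op_smul_eq_mul]; exact a.smul_mem _ hf
  refine ⟨f, ?_, fun r => ?_, le_antisymm (fun x hx => ?_) ?_⟩
  · calc f * f = f * (f + g) := by rw [mul_add, hab f hf g hg, add_zero]
      _ = f := by rw [hfg, mul_one]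
  · calc f * r = f * r * (f + g) := by rw [hfg, mul_one]
      _ = (f + g) * r * f := by
        rw [mul_add, hab _ (hfr r) g hg, add_zero, add_mul, add_mul, mul_assoc g,
          hba g hg _ (ha r f hf), add_zero]
      _ = r * f := by rw [hfg, one_mul]
  · refine mem_span_mop_singleton.mpr ⟨x, ?_⟩
    calc f * x = (f + g) * x := by rw [add_mul, hba g hg x hx, add_zero]
      _ = x := by rw [hfg, one_mul]
  · exact Submodule.span_le.mpr (Set.singleton_subset_iff.mpr hf)

end Ring

/-- For an idempotent `e ∈ R`, the right ideal `eR` is a complemented distributive submodule of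
`R` (as right `R`-module) iff `e` is central; moreover every direct sum decomposition
`R = a ⊕ b` into two-sided ideals is a lattice decomposition. -/
theorem idempotent_lattice_decomposition {R : Type*} [Ring R] (e : R) (he : e * e = e) :
    (IsDistribSubmodule (Submodule.span Rᵐᵒᵖ ({e} : Set R)) ↔ ∀ r : R, e * r = r * e) ∧
    (∀ a b : Submodule Rᵐᵒᵖ R,
      (∀ r x : R, x ∈ a → r * x ∈ a) → (∀ r x : R, x ∈ b → r * x ∈ b) →
      a ⊓ b = ⊥ → a ⊔ b = ⊤ → IsDistribSubmodule a) := by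
  refine ⟨isDistribSubmodule_span_mop_singleton_iff he, fun a b ha hb hinf hsup => ?_⟩
  obtain ⟨f, hf, hfc, rfl⟩ := exists_isIdempotentElem_commute_eq_span_of_twoSided ha hb hinf hsup
  exact isDistribSubmodule_span_of_commute hf hfc
end

section
/- Let A be a commutative ring and M a finitely generated A-module. (1) If N is a complemented distributive submodule of M with associated idempotent endomorphism e (e ∘ e = e, range(e) = N, ker(e) a complement of N), then there exists a ∈ A such that e(m) = a • m for all m ∈ M; in particular the class of a in A/Ann(M) is idempotent. (2) Conversely, if a ∈ A satisfies a² - a ∈ Ann(M) and a ∉ Ann(M), then a • M is a nonzero complemented distributive submodule of M (with complement (1-a) • M). -/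
open Submodule LinearMap

theorem inf_le_of_isCompl_of_sup_inf_eq {α : Type*} [Lattice α] [BoundedOrder α]
    [IsModularLattice α] {N K Y : α} (hNK : IsCompl N K) (hdist : N ⊔ Y ⊓ K = (N ⊔ Y) ⊓ (N ⊔ K)) :
    (N ⊔ Y) ⊓ K ≤ Y := by
  rw [hNK.sup_eq_top, inf_top_eq] at hdist
  calc (N ⊔ Y) ⊓ K = (Y ⊓ K ⊔ N) ⊓ K := by rw [← hdist, sup_comm]
    _ = Y ⊓ K := by rw [sup_inf_assoc_of_le _ inf_le_right, hNK.inf_eq_bot, sup_bot_eq]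
    _ ≤ Y := inf_le_left

section Ring

variable {R M : Type*} [Ring R] [AddCommGroup M] [Module R M]

theorem isDistribSubmodule_range_iff {e : Module.End R M} (he : IsIdempotentElem e) :
    IsDistribSubmodule (range e) ↔ ∀ m, e m ∈ R ∙ m := by
  constructor
  · intro hdist m
    have hfix : m - e m ∈ (range e ⊔ R ∙ m) ⊓ ker e := by
      refine mem_inf.mpr
        ⟨sub_mem (mem_sup_right (mem_span_singleton_self m)) (mem_sup_left ⟨m, rfl⟩), ?_⟩
      rw [mem_ker, map_sub, ← Module.End.mul_apply, he.eq, sub_self]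
    have hmem := inf_le_of_isCompl_of_sup_inf_eq he.isCompl (hdist _ _) hfix
    simpa using sub_mem (mem_span_singleton_self m) hmem
  · intro hspan Y₁ Y₂
    refine le_antisymm sup_inf_le fun x ⟨hx₁, hx₂⟩ => ?_
    have hproj : ∀ Y : Submodule R M, x ∈ range e ⊔ Y → x - e x ∈ Y := by
      intro Y hx
      obtain ⟨n, hn, y, hy, rfl⟩ := mem_sup.mp hx
      have hey : e y ∈ Y := span_singleton_le_iff_mem _ _ |>.mpr hy (hspan y)
      rw [map_add, he.mem_range_iff.mp hn, add_sub_add_left_eq_sub]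
      exact sub_mem hy hey
    rw [← add_sub_cancel (e x) x]
    exact add_mem (mem_sup_left ⟨x, rfl⟩) (mem_sup_right ⟨hproj _ hx₁, hproj _ hx₂⟩)

end Ring

section CommRing

variable {R M : Type*} [CommRing R] [AddCommGroup M] [Module R M]

theorem isIdempotentElem_smul_id_iff {a : R} :
    IsIdempotentElem (a • LinearMap.id : Module.End R M) ↔
      a * a - a ∈ Module.annihilator R M := by
  simp [IsIdempotentElem, Module.mem_annihilator, LinearMap.ext_iff, sub_smul, mul_smul,
    sub_eq_zero]

theorem isCoprime_annihilator_span_singleton {e : Module.End R M} (he : IsIdempotentElem e)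
    (hspan : ∀ m, e m ∈ R ∙ m) {n k : M} (hn : n ∈ range e) (hk : k ∈ ker e) :
    IsCoprime (R ∙ n).annihilator (R ∙ k).annihilator := by
  obtain ⟨c, hc⟩ := mem_span_singleton.mp (hspan (n + k))
  have hen : e (n + k) = n := by rw [map_add, he.mem_range_iff.mp hn, mem_ker.mp hk, add_zero]
  have hcn : c • n = n := by
    simpa [hen, he.mem_range_iff.mp hn, mem_ker.mp hk] using congrArg e hc
  refine Ideal.isCoprime_iff_exists.mpr ⟨1 - c, ?_, c, ?_, sub_add_cancel 1 c⟩
  · rw [mem_annihilator_span_singleton, sub_smul, one_smul, hcn, sub_self]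
  · rw [mem_annihilator_span_singleton]
    rw [hen, smul_add, hcn] at hc
    simpa using hc

theorem isCoprime_annihilator_of_fg {N : Submodule R M} (hN : N.FG) {J : Ideal R}
    (h : ∀ x ∈ N, IsCoprime (R ∙ x).annihilator J) : IsCoprime N.annihilator J := by
  induction N, hN using fg_induction with
  | singleton x => exact h x (mem_span_singleton_self x)
  | sup N₁ N₂ _ _ ih₁ ih₂ =>
    have h₁ := ih₁ fun x hx => h x (mem_sup_left hx)
    have h₂ := ih₂ fun x hx => h x (mem_sup_right hx)
    rw [annihilator_sup, Ideal.isCoprime_iff_codisjoint]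
    exact (Ideal.isCoprime_iff_codisjoint.mp (h₁.mul_left h₂)).mono_left Ideal.mul_le_inf

theorem exists_eq_smul_id_of_isDistribSubmodule_range [Module.Finite R M] {e : Module.End R M}
    (he : IsIdempotentElem e) (hdist : IsDistribSubmodule (range e)) :
    ∃ a : R, e = a • LinearMap.id := by
  have hspan := (isDistribSubmodule_range_iff he).mp hdist
  have hker : (ker e).FG := he.ker_eq_range_one_sub ▸ fg_range _
  have hcop : IsCoprime (range e).annihilator (ker e).annihilator :=
    isCoprime_annihilator_of_fg (fg_range e) fun n hn =>
      (isCoprime_annihilator_of_fg hker fun k hk =>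
        (isCoprime_annihilator_span_singleton he hspan hn hk).symm).symm
  obtain ⟨i, hi, a, ha, hia⟩ := hcop.exists
  refine ⟨a, LinearMap.ext fun m => ?_⟩
  have hm : m - e m ∈ ker e := by
    rw [mem_ker, map_sub, ← Module.End.mul_apply, he.eq, sub_self]
  have hie : i • e m = 0 := mem_annihilator.mp hi _ ⟨m, rfl⟩
  calc e m = (i + a) • e m := by rw [hia, one_smul]
    _ = a • (e m + (m - e m)) := by
      rw [add_smul, hie, zero_add, smul_add, mem_annihilator.mp ha _ hm, add_zero]
    _ = (a • LinearMap.id : Module.End R M) m := by simp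

end CommRing

/-- For a finitely generated module `M` over a commutative ring `A`: every complemented
distributive submodule comes from an idempotent of `A/Ann(M)` acting by multiplication, and
conversely every nonzero idempotent of `A/Ann(M)` yields a nonzero complemented distributive
submodule `aM ⊆ M`. -/
theorem complemented_distrib_of_finite_iff_idempotent {A M : Type*} [CommRing A]
    [AddCommGroup M] [Module A M] [Module.Finite A M] :
    (∀ e : M →ₗ[A] M, e ∘ₗ e = e → ∀ N : Submodule A M, LinearMap.range e = N →
      IsDistribSubmodule N →
      ∃ a : A, (∀ m : M, e m = a • m) ∧ a * a - a ∈ Module.annihilator A M) ∧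
    (∀ a : A, a * a - a ∈ Module.annihilator A M → a ∉ Module.annihilator A M →
      LinearMap.range (a • (LinearMap.id : M →ₗ[A] M)) ≠ ⊥ ∧
      IsDistribSubmodule (LinearMap.range (a • (LinearMap.id : M →ₗ[A] M))) ∧
      LinearMap.range (a • (LinearMap.id : M →ₗ[A] M)) ⊓
        LinearMap.range ((1 - a) • (LinearMap.id : M →ₗ[A] M)) = ⊥ ∧
      LinearMap.range (a • (LinearMap.id : M →ₗ[A] M)) ⊔
        LinearMap.range ((1 - a) • (LinearMap.id : M →ₗ[A] M)) = ⊤) := by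
  refine ⟨fun e he N hN hdist => ?_, fun a ha hna => ?_⟩
  · subst hN
    obtain ⟨a, rfl⟩ := exists_eq_smul_id_of_isDistribSubmodule_range he hdist
    exact ⟨a, fun m => rfl, isIdempotentElem_smul_id_iff.mp he⟩
  · have he := isIdempotentElem_smul_id_iff.mpr ha
    have hcompl : (1 - a) • (LinearMap.id : M →ₗ[A] M) = 1 - a • LinearMap.id := by
      rw [sub_smul, one_smul, Module.End.one_eq_id]
    rw [hcompl, ← he.ker_eq_range_one_sub]
    refine ⟨?_, (isDistribSubmodule_range_iff he).mpr fun m => smul_mem _ a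
      (mem_span_singleton_self m), he.isCompl.inf_eq_bot, he.isCompl.sup_eq_top⟩
    rw [Ne, range_eq_bot]
    exact fun h0 => hna (Module.mem_annihilator.mpr fun m => by simpa using congrArg (· m) h0)
end

section
/- Let R be a ring, M a right R-module, N a submodule of M, and ι a nonempty index set. Let M^(ι) denote the direct sum of ι copies of M (finitely supported functions ι →₀ M with pointwise structure) and let N^(ι) be the submodule {f ∈ M^(ι) | f(i) ∈ N for all i ∈ ι}. Then N is a complemented distributive submodule of M if and only if N^(ι) is a complemented distributive submodule of M^(ι). -/
/-- `N` is a complemented distributive submodule of a module `M`. -/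
def IsComplDistribSubmodule {R M : Type*} [Ring R] [AddCommGroup M] [Module R M]
    (N : Submodule R M) : Prop :=
  IsDistribSubmodule N ∧ ∃ H : Submodule R M, N ⊓ H = ⊥ ∧ N ⊔ H = ⊤

open Submodule

theorem sup_inf_sup_eq_of_disjoint {α : Type*} [Lattice α] [OrderBot α]
    [IsModularLattice α] {n h a b : α} (hnh : Disjoint n h) (ha : a ≤ h) (hb : b ≤ h) :
    (n ⊔ a) ⊓ (n ⊔ b) = n ⊔ a ⊓ b := by
  have hhb : h ⊓ (n ⊔ b) = b := by
    rw [← inf_sup_assoc_of_le n hb, hnh.symm.eq_bot, bot_sup_eq]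
  rw [sup_inf_assoc_of_le a le_sup_left, ← hhb, ← inf_assoc, inf_eq_left.2 ha, hhb]

section Module

variable {R M : Type*} [Ring R] [AddCommGroup M] [Module R M]

/-- Every cyclic submodule `R m` is the sum of its intersections with `N` and `H`. -/
def ScalarSplit (N H : Submodule R M) : Prop :=
  ∀ m : M, ∃ a : R, a • m ∈ N ∧ m - a • m ∈ H

def ScalarSeparated (N H : Submodule R M) : Prop :=
  ∀ n ∈ N, ∀ h ∈ H, ∃ a : R, a • n = n ∧ a • h = 0

variable {N H : Submodule R M}

theorem isDistribSubmodule_iff_forall_sup_le (hc : IsCompl N H) :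
    IsDistribSubmodule N ↔ ∀ Y : Submodule R M, N ⊔ Y ≤ N ⊔ Y ⊓ H := by
  refine ⟨fun hd Y => by rw [hd, hc.sup_eq_top, inf_top_eq], fun hY Y₁ Y₂ => ?_⟩
  refine le_antisymm sup_inf_le ?_
  calc (N ⊔ Y₁) ⊓ (N ⊔ Y₂) ≤ (N ⊔ Y₁ ⊓ H) ⊓ (N ⊔ Y₂ ⊓ H) := inf_le_inf (hY Y₁) (hY Y₂)
    _ = N ⊔ Y₁ ⊓ H ⊓ (Y₂ ⊓ H) :=
      sup_inf_sup_eq_of_disjoint hc.disjoint inf_le_right inf_le_right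
    _ ≤ N ⊔ Y₁ ⊓ Y₂ := sup_le_sup_left (inf_le_inf inf_le_left inf_le_left) N

theorem forall_sup_le_iff_scalarSplit :
    (∀ Y : Submodule R M, N ⊔ Y ≤ N ⊔ Y ⊓ H) ↔ ScalarSplit N H := by
  constructor
  · intro hY m
    obtain ⟨n, hn, y, ⟨hym, hyH⟩, hny⟩ :=
      mem_sup.1 (hY (span R {m}) (mem_sup_right (mem_span_singleton_self m)))
    obtain ⟨c, rfl⟩ := mem_span_singleton.1 hym
    refine ⟨1 - c, ?_, ?_⟩
    · rwa [sub_smul, one_smul, ← eq_sub_of_add_eq hny]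
    · rwa [sub_smul, one_smul, sub_sub_cancel]
  · intro hs Y
    refine sup_le le_sup_left fun y hy => ?_
    obtain ⟨a, hN, hH⟩ := hs y
    rw [← add_sub_cancel (a • y) y]
    exact add_mem_sup hN ⟨Y.sub_mem hy (Y.smul_mem a hy), hH⟩

theorem scalarSplit_iff_scalarSeparated (hc : IsCompl N H) :
    ScalarSplit N H ↔ ScalarSeparated N H := by
  have eq_zero {x : M} (hN : x ∈ N) (hH : x ∈ H) : x = 0 := disjoint_def.1 hc.disjoint x hN hH
  constructor
  · intro hs n hn h hh
    obtain ⟨a, hN, hH⟩ := hs (n + h)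
    -- uniqueness of the decomposition of `n + h` along `N ⊕ H`
    have hn' : a • (n + h) = n := by
      refine sub_eq_zero.1 (eq_zero (N.sub_mem hN hn) ?_)
      rw [← sub_sub_sub_cancel_left _ _ (n + h), add_sub_cancel_left]
      exact H.sub_mem hh hH
    have hh' : a • h = 0 := by
      refine eq_zero ?_ (H.smul_mem a hh)
      rw [← add_sub_cancel_left (a • n) (a • h), ← smul_add, hn']
      exact N.sub_mem hn (N.smul_mem a hn)
    exact ⟨a, by rwa [smul_add, hh', add_zero] at hn', hh'⟩
  · intro hsep m
    obtain ⟨n, hn, h, hh, rfl⟩ := mem_sup.1 (hc.sup_eq_top ▸ mem_top : m ∈ N ⊔ H)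
    obtain ⟨a, han, hah⟩ := hsep n hn h hh
    refine ⟨a, ?_⟩
    rw [smul_add, han, hah, add_zero, add_sub_cancel_left]
    exact ⟨hn, hh⟩

theorem isDistribSubmodule_iff_scalarSeparated (hc : IsCompl N H) :
    IsDistribSubmodule N ↔ ScalarSeparated N H :=
  (isDistribSubmodule_iff_forall_sup_le hc).trans
    (forall_sup_le_iff_scalarSplit.trans (scalarSplit_iff_scalarSeparated hc))

theorem isComplDistribSubmodule_iff_exists_scalarSeparated :
    IsComplDistribSubmodule N ↔ ∃ H, IsCompl N H ∧ ScalarSeparated N H := by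
  constructor
  · rintro ⟨hd, H, hinf, hsup⟩
    have hc : IsCompl N H := ⟨disjoint_iff.2 hinf, codisjoint_iff.2 hsup⟩
    exact ⟨H, hc, (isDistribSubmodule_iff_scalarSeparated hc).1 hd⟩
  · rintro ⟨H, hc, hsep⟩
    exact ⟨(isDistribSubmodule_iff_scalarSeparated hc).2 hsep, H, hc.inf_eq_bot, hc.sup_eq_top⟩

theorem ScalarSeparated.symm (hsep : ScalarSeparated N H) : ScalarSeparated H N := by
  intro h hh n hn
  obtain ⟨a, han, hah⟩ := hsep n hn h hh
  exact ⟨1 - a, by rw [sub_smul, one_smul, hah, sub_zero],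
    by rw [sub_smul, one_smul, han, sub_self]⟩

theorem exists_forall_smul_eq_self_and_forall_smul_eq_zero {s : Set M}
    (hs : ∀ h ∈ H, ∃ a : R, (∀ n ∈ s, a • n = n) ∧ a • h = 0) {t : Set M} (ht : t.Finite)
    (htH : t ⊆ H) : ∃ a : R, (∀ n ∈ s, a • n = n) ∧ ∀ h ∈ t, a • h = 0 := by
  induction t, ht using Set.Finite.induction_on with
  | empty => exact ⟨1, by simp, by simp⟩
  | @insert h t _ _ ih =>
    obtain ⟨a, has, hat⟩ := ih ((Set.subset_insert h t).trans htH)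
    obtain ⟨b, hbs, hbh⟩ := hs (a • h) (H.smul_mem a (htH (Set.mem_insert h t)))
    refine ⟨b * a, fun n hn => by rw [mul_smul, has n hn, hbs n hn], ?_⟩
    rintro k (rfl | hk)
    · rwa [mul_smul]
    · rw [mul_smul, hat k hk, smul_zero]

theorem ScalarSeparated.exists_of_finite (hsep : ScalarSeparated N H) {s t : Set M}
    (hs : s.Finite) (hsN : s ⊆ N) (ht : t.Finite) (htH : t ⊆ H) :
    ∃ a : R, (∀ n ∈ s, a • n = n) ∧ ∀ h ∈ t, a • h = 0 := by
  refine exists_forall_smul_eq_self_and_forall_smul_eq_zero (fun h hh => ?_) ht htH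
  obtain ⟨a, hah, has⟩ := exists_forall_smul_eq_self_and_forall_smul_eq_zero (s := {h})
    (fun n hn => by simpa using hsep.symm h hh n hn) hs hsN
  exact ⟨1 - a, fun n hn => by rw [sub_smul, one_smul, has n hn, sub_zero],
    by rw [sub_smul, one_smul, hah h rfl, sub_self]⟩

/-- The submodule `N^(ι)` of `ι →₀ M`. -/
noncomputable def Submodule.finsupp (N : Submodule R M) (ι : Type*) : Submodule R (ι →₀ M) :=
  ⨅ i : ι, N.comap (Finsupp.lapply i)

variable {ι : Type*}

@[simp]
theorem Submodule.mem_finsupp {f : ι →₀ M} : f ∈ N.finsupp ι ↔ ∀ i, f i ∈ N := by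
  simp [Submodule.finsupp, mem_iInf]

theorem Submodule.single_mem_finsupp (i : ι) {n : M} (hn : n ∈ N) :
    Finsupp.single i n ∈ N.finsupp ι := by
  classical
  refine mem_finsupp.2 fun j => ?_
  rw [Finsupp.single_apply]
  split_ifs
  exacts [hn, N.zero_mem]

theorem Submodule.comap_lsingle_finsupp (i : ι) :
    (N.finsupp ι).comap (Finsupp.lsingle i) = N := by
  ext m
  exact ⟨fun h => by simpa using mem_finsupp.1 h i, single_mem_finsupp i⟩

theorem IsCompl.finsupp (hc : IsCompl N H) : IsCompl (N.finsupp ι) (H.finsupp ι) := by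
  refine ⟨disjoint_def.2 fun f hN hH => Finsupp.ext fun i =>
    disjoint_def.1 hc.disjoint _ (mem_finsupp.1 hN i) (mem_finsupp.1 hH i), ?_⟩
  refine codisjoint_iff.2 (eq_top_iff'.2 fun f => ?_)
  induction f using Finsupp.induction_linear with
  | zero => exact zero_mem _
  | add f g hf hg => exact add_mem hf hg
  | single i m =>
    obtain ⟨n, hn, h, hh, rfl⟩ := mem_sup.1 (hc.sup_eq_top ▸ mem_top : m ∈ N ⊔ H)
    rw [Finsupp.single_add]
    exact add_mem_sup (single_mem_finsupp i hn) (single_mem_finsupp i hh)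

theorem ScalarSeparated.finsupp (hsep : ScalarSeparated N H) :
    ScalarSeparated (N.finsupp ι) (H.finsupp ι) := by
  intro u hu w hw
  obtain ⟨a, hau, haw⟩ := hsep.exists_of_finite u.finite_range
    (Set.range_subset_iff.2 (mem_finsupp.1 hu)) w.finite_range
    (Set.range_subset_iff.2 (mem_finsupp.1 hw))
  exact ⟨a, Finsupp.ext fun i => hau _ ⟨i, rfl⟩, Finsupp.ext fun i => haw _ ⟨i, rfl⟩⟩

theorem IsComplDistribSubmodule.finsupp (hN : IsComplDistribSubmodule N) (ι : Type*) :
    IsComplDistribSubmodule (N.finsupp ι) := by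
  obtain ⟨H, hc, hsep⟩ := isComplDistribSubmodule_iff_exists_scalarSeparated.1 hN
  exact isComplDistribSubmodule_iff_exists_scalarSeparated.2 ⟨_, hc.finsupp, hsep.finsupp⟩

theorem IsComplDistribSubmodule.comap_of_injective {M' : Type*} [AddCommGroup M'] [Module R M']
    {N' : Submodule R M'} (hN' : IsComplDistribSubmodule N') {φ : M →ₗ[R] M'}
    (hφ : Function.Injective φ) : IsComplDistribSubmodule (N'.comap φ) := by
  obtain ⟨H', hc, hsep⟩ := isComplDistribSubmodule_iff_exists_scalarSeparated.1 hN'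
  refine isComplDistribSubmodule_iff_exists_scalarSeparated.2 ⟨H'.comap φ, ⟨?_, ?_⟩, ?_⟩
  · refine disjoint_def.2 fun m hN hH => hφ ?_
    rw [map_zero]
    exact disjoint_def.1 hc.disjoint _ hN hH
  · refine codisjoint_iff.2 (eq_top_iff'.2 fun m => ?_)
    obtain ⟨a, hN, hH⟩ := (scalarSplit_iff_scalarSeparated hc).2 hsep (φ m)
    rw [← add_sub_cancel (a • m) m]
    exact add_mem_sup (by rwa [mem_comap, map_smul]) (by rwa [mem_comap, map_sub, map_smul])
  · intro n hn h hh
    obtain ⟨a, han, hah⟩ := hsep _ hn _ hh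
    exact ⟨a, hφ (by rw [map_smul, han]), hφ (by rw [map_smul, hah, map_zero])⟩

end Module

/-- `N ⊆ M` is a complemented distributive submodule iff `N^(ι) ⊆ M^(ι)` is a complemented
distributive submodule of the direct sum of `ι` copies of `M`. -/
theorem isComplDistribSubmodule_finsupp_iff {R M : Type*} [Ring R] [AddCommGroup M]
    [Module Rᵐᵒᵖ M] (N : Submodule Rᵐᵒᵖ M) (ι : Type*) [Nonempty ι] :
    IsComplDistribSubmodule N ↔
      IsComplDistribSubmodule
        (⨅ i : ι, Submodule.comap (Finsupp.lapply (M := M) (R := Rᵐᵒᵖ) i) N) := by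
  obtain ⟨i⟩ := ‹Nonempty ι›
  refine ⟨fun hN => hN.finsupp ι, fun hN => ?_⟩
  rw [← N.comap_lsingle_finsupp i]
  exact IsComplDistribSubmodule.comap_of_injective hN (Finsupp.single_injective i)
end
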